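/- arXiv:2505.20780 — 6 statements merged into one kernel-verified Lean document; each statement's English description precedes it below -/
import Mathlib

section
/- For every n ≥ 2, every choice of positive weights a_1,…,a_n, b_1,…,b_n, and every Bernoulli randomization design with p_i ∈ (0,1), there exist potential dyadic outcomes satisfying dyadic interference for which the upstream weighted estimator τ̃(U) = n^{-1} Σ_i (Z_i/a_i − (1−Z_i)/b_i) U_i is biased, i.e. E{τ̃(U)} ≠ τ; the same holds for the downstream weighted estimator τ̃(D) = n^{-1} Σ_i (Z_i/a_i − (1−Z_i)/b_i) D_i. -/
open Finset
open scoped Classical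

noncomputable section

/-- The real-valued indicator of a boolean treatment status. -/
def indR (b : Bool) : ℝ := if b then 1 else 0

/-- Expectation of `f` under the probability mass function `w` on treatment vectors. -/
def expec {m : ℕ} (w : (Fin m → Bool) → ℝ) (f : (Fin m → Bool) → ℝ) : ℝ :=
  ∑ z : Fin m → Bool, w z * f z

/-- Probability of the event `E` under the pmf `w`. -/
def prEvent {m : ℕ} (w : (Fin m → Bool) → ℝ) (E : (Fin m → Bool) → Prop) : ℝ :=
  ∑ z : Fin m → Bool, if E z then w z else 0

/-- Variance of `f` under the pmf `w`. -/
def varc {m : ℕ} (w : (Fin m → Bool) → ℝ) (f : (Fin m → Bool) → ℝ) : ℝ :=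
  expec w (fun z => (f z - expec w f) ^ 2)

/-- Covariance of `f` and `g` under the pmf `w`. -/
def covar {m : ℕ} (w : (Fin m → Bool) → ℝ) (f g : (Fin m → Bool) → ℝ) : ℝ :=
  expec w (fun z => (f z - expec w f) * (g z - expec w g))

/-- Bernoulli randomization: independent assignments with pr(Z_i = 1) = p_i. -/
def bernWeight {m : ℕ} (p : Fin m → ℝ) (z : Fin m → Bool) : ℝ :=
  ∏ i, if z i then p i else 1 - p i

/-- Complete randomization: uniform over assignments with exactly `n1` treated units. -/
def crWeight (n n1 : ℕ) (z : Fin n → Bool) : ℝ :=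
  if (univ.filter (fun i => z i = true)).card = n1 then ((n.choose n1 : ℝ))⁻¹ else 0

/-- The global average treatment effect τ. -/
def gate {n : ℕ} (Y : Fin n → Fin n → Bool → Bool → ℝ) : ℝ :=
  (n : ℝ)⁻¹ * ∑ i, ∑ j ∈ univ.erase i, (Y i j true true - Y i j false false)

/-- The set of potential neighbours N_i(𝗓). -/
def nbhd {n : ℕ} (Y : Fin n → Fin n → Bool → Bool → ℝ) (s : Bool) (i : Fin n) :
    Finset (Fin n) :=
  (univ.erase i).filter (fun j => Y i j s s ≠ 0 ∨ Y j i s s ≠ 0)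

/-- Average number of potential neighbours d₁(𝗓). -/
def d1 {n : ℕ} (Y : Fin n → Fin n → Bool → Bool → ℝ) (s : Bool) : ℝ :=
  (n : ℝ)⁻¹ * ∑ i, ((nbhd Y s i).card : ℝ)

/-- Mean squared number of potential neighbours d₂(𝗓). -/
def d2 {n : ℕ} (Y : Fin n → Fin n → Bool → Bool → ℝ) (s : Bool) : ℝ :=
  (n : ℝ)⁻¹ * ∑ i, ((nbhd Y s i).card : ℝ) ^ 2

/-- Maximum number of potential neighbours d_∞(𝗓). -/
def dinf {n : ℕ} (Y : Fin n → Fin n → Bool → Bool → ℝ) (s : Bool) : ℝ :=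
  sSup (Set.range fun i => ((nbhd Y s i).card : ℝ))

/-- P_𝗓 = min_i pr(Z_i = 𝗓) for a Bernoulli design. -/
def Pz {n : ℕ} (p : Fin n → ℝ) : Bool → ℝ
  | true => sInf (Set.range p)
  | false => sInf (Set.range fun i => 1 - p i)

/-- The Horvitz–Thompson estimator under Bernoulli randomization. -/
def tauHT {n : ℕ} (p : Fin n → ℝ) (Y : Fin n → Fin n → Bool → Bool → ℝ)
    (z : Fin n → Bool) : ℝ :=
  (n : ℝ)⁻¹ * ∑ i, ∑ j ∈ univ.erase i,
    (indR (z i) * indR (z j) / (p i * p j)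
      - (1 - indR (z i)) * (1 - indR (z j)) / ((1 - p i) * (1 - p j)))
      * Y i j (z i) (z j)

/-- The Hájek estimator under Bernoulli randomization. -/
def tauHA {n : ℕ} (p : Fin n → ℝ) (Y : Fin n → Fin n → Bool → Bool → ℝ)
    (z : Fin n → Bool) : ℝ :=
  (∑ i, indR (z i) / p i)⁻¹ *
      ∑ i, ∑ j ∈ univ.erase i,
        indR (z i) * indR (z j) * Y i j (z i) (z j) / (p i * p j)
    - (∑ i, (1 - indR (z i)) / (1 - p i))⁻¹ *
      ∑ i, ∑ j ∈ univ.erase i,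
        (1 - indR (z i)) * (1 - indR (z j)) * Y i j (z i) (z j) / ((1 - p i) * (1 - p j))

/-- The convergence rate r_n (for a design with minimum assignment probabilities `P`). -/
def rOf {n : ℕ} (P : Bool → ℝ) (Y : Fin n → Fin n → Bool → Bool → ℝ) : ℝ :=
  max
      (max ((P false)⁻¹ * Real.sqrt (d1 Y false))
        ((Real.sqrt (P false))⁻¹ * Real.sqrt (d2 Y false)))
      (max ((P true)⁻¹ * Real.sqrt (d1 Y true))
        ((Real.sqrt (P true))⁻¹ * Real.sqrt (d2 Y true)))
    * (Real.sqrt n)⁻¹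

/-- The observed upstream aggregate U_i = Σ_{j≠i} Y_ji. -/
def unitU {n : ℕ} (Y : Fin n → Fin n → Bool → Bool → ℝ) (z : Fin n → Bool)
    (i : Fin n) : ℝ :=
  ∑ j ∈ univ.erase i, Y j i (z j) (z i)

/-- The observed downstream aggregate D_i = Σ_{j≠i} Y_ij. -/
def unitD {n : ℕ} (Y : Fin n → Fin n → Bool → Bool → ℝ) (z : Fin n → Bool)
    (i : Fin n) : ℝ :=
  ∑ j ∈ univ.erase i, Y i j (z i) (z j)

/-- The upstream weighted estimator τ̃(U). -/
def tauTildeU {n : ℕ} (a b : Fin n → ℝ) (Y : Fin n → Fin n → Bool → Bool → ℝ)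
    (z : Fin n → Bool) : ℝ :=
  (n : ℝ)⁻¹ * ∑ i, (indR (z i) / a i - (1 - indR (z i)) / b i) * unitU Y z i

/-- The downstream weighted estimator τ̃(D). -/
def tauTildeD {n : ℕ} (a b : Fin n → ℝ) (Y : Fin n → Fin n → Bool → Bool → ℝ)
    (z : Fin n → Bool) : ℝ :=
  (n : ℝ)⁻¹ * ∑ i, (indR (z i) / a i - (1 - indR (z i)) / b i) * unitD Y z i

/-- for every n ≥ 2, all positive weights, and every Bernoulli design,
there exist potential dyadic outcomes for which τ̃(U) is biased, and likewise for τ̃(D). -/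
theorem statement1 (n : ℕ) (hn : 2 ≤ n) (p a b : Fin n → ℝ)
    (hp : ∀ i, p i ∈ Set.Ioo (0 : ℝ) 1)
    (ha : ∀ i, 0 < a i) (hb : ∀ i, 0 < b i) :
    (∃ Y : Fin n → Fin n → Bool → Bool → ℝ,
        expec (bernWeight p) (tauTildeU a b Y) ≠ gate Y)
      ∧ (∃ Y : Fin n → Fin n → Bool → Bool → ℝ,
        expec (bernWeight p) (tauTildeD a b Y) ≠ gate Y) := by
  have hn0 : (0:ℝ) < (n:ℝ)⁻¹ := by positivity
  set i0 : Fin n := ⟨0, by omega⟩ with hi0def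
  set i1 : Fin n := ⟨1, by omega⟩ with hi1def
  have hne : i0 ≠ i1 := by simp [hi0def, hi1def, Fin.ext_iff]
  set Y : Fin n → Fin n → Bool → Bool → ℝ :=
    fun i j s t => if i = i0 ∧ j = i1 ∧ s = false ∧ t = true then 1 else 0 with hYdef
  have hgate : gate Y = 0 := by
    simp [gate, hYdef]
  have hw : ∀ z : Fin n → Bool, 0 < bernWeight p z := by
    intro z
    refine Finset.prod_pos fun i _ => ?_
    cases z i <;> simp
    · linarith [(hp i).2]
    · exact (hp i).1
  -- witness assignment
  set z0 : Fin n → Bool := fun j => decide (j = i1) with hz0def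
  have hz0a : z0 i0 = false := by simp [hz0def, hne]
  have hz0b : z0 i1 = true := by simp [hz0def]
  have hU : ∀ z : Fin n → Bool, tauTildeU a b Y z
      = (n:ℝ)⁻¹ * ((indR (z i1) / a i1 - (1 - indR (z i1)) / b i1)
          * (if z i0 = false ∧ z i1 = true then 1 else 0)) := by
    intro z
    unfold tauTildeU unitU
    congr 1
    rw [Finset.sum_eq_single i1]
    · congr 1
      rw [Finset.sum_eq_single i0]
      · simp [hYdef]
      · intro j _ hji0; simp [hYdef, hji0]
      · intro h; exact absurd (Finset.mem_erase.mpr ⟨hne, mem_univ _⟩) h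
    · intro i _ hi; simp [hYdef, hi]
    · simp
  have hD : ∀ z : Fin n → Bool, tauTildeD a b Y z
      = (n:ℝ)⁻¹ * ((indR (z i0) / a i0 - (1 - indR (z i0)) / b i0)
          * (if z i0 = false ∧ z i1 = true then 1 else 0)) := by
    intro z
    unfold tauTildeD unitD
    congr 1
    rw [Finset.sum_eq_single i0]
    · congr 1
      rw [Finset.sum_eq_single i1]
      · simp [hYdef]
      · intro j _ hji1; simp [hYdef, hji1]
      · intro h; exact absurd (Finset.mem_erase.mpr ⟨hne.symm, mem_univ _⟩) h
    · intro i _ hi; simp [hYdef, hi]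
    · simp
  constructor
  · refine ⟨Y, ?_⟩
    rw [hgate]
    have hpos : 0 < expec (bernWeight p) (tauTildeU a b Y) := by
      unfold expec
      refine Finset.sum_pos' (fun z _ => ?_) ⟨z0, mem_univ _, ?_⟩
      · rw [hU z]
        by_cases hc : z i0 = false ∧ z i1 = true
        · rw [if_pos hc, hc.2]
          have he : (indR true / a i1 - (1 - indR true) / b i1) = (a i1)⁻¹ := by
            simp [indR]
          rw [he, mul_one]
          exact mul_nonneg (hw z).le
            (mul_nonneg hn0.le (inv_nonneg.mpr (ha i1).le))
        · rw [if_neg hc]; simp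
      · rw [hU z0, if_pos ⟨hz0a, hz0b⟩, hz0b]
        have he : (indR true / a i1 - (1 - indR true) / b i1) = (a i1)⁻¹ := by
          simp [indR]
        rw [he, mul_one]
        exact mul_pos (hw z0) (mul_pos hn0 (inv_pos.mpr (ha i1)))
    exact ne_of_gt hpos
  · refine ⟨Y, ?_⟩
    rw [hgate]
    have hneg : expec (bernWeight p) (tauTildeD a b Y) < 0 := by
      unfold expec
      have hpos : 0 < ∑ z : Fin n → Bool, -(bernWeight p z * tauTildeD a b Y z) := by
        refine Finset.sum_pos' (fun z _ => ?_) ⟨z0, mem_univ _, ?_⟩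
        · rw [hD z]
          by_cases hc : z i0 = false ∧ z i1 = true
          · rw [if_pos hc, hc.1]
            have he : (indR false / a i0 - (1 - indR false) / b i0) = -(b i0)⁻¹ := by
              simp [indR]
            rw [he, mul_one, mul_neg, mul_neg, neg_neg]
            exact mul_nonneg (hw z).le
              (mul_nonneg hn0.le (inv_nonneg.mpr (hb i0).le))
          · rw [if_neg hc]; simp
        · rw [hD z0, if_pos ⟨hz0a, hz0b⟩, hz0a]
          have he : (indR false / a i0 - (1 - indR false) / b i0) = -(b i0)⁻¹ := by
            simp [indR]
          rw [he, mul_one, mul_neg, mul_neg, neg_neg]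
          exact mul_pos (hw z0) (mul_pos hn0 (inv_pos.mpr (hb i0)))
      rw [Finset.sum_neg_distrib] at hpos
      linarith
    exact ne_of_lt hneg
end
end

section
/- Under complete randomization with 2 ≤ n_1 ≤ n−2 and dyadic interference, the Horvitz–Thompson estimator is unbiased for the global average treatment effect: E(τ̂_HT) = τ. -/
open Finset
open scoped Classical

noncomputable section

/-- p_ij under complete randomization. -/
def pijCR (n n1 : ℕ) : ℝ :=
  (n1 : ℝ) * ((n1 : ℝ) - 1) / ((n : ℝ) * ((n : ℝ) - 1))

/-- q_ij under complete randomization. -/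
def qijCR (n n1 : ℕ) : ℝ :=
  ((n : ℝ) - (n1 : ℝ)) * ((n : ℝ) - (n1 : ℝ) - 1) / ((n : ℝ) * ((n : ℝ) - 1))

/-- The Horvitz–Thompson estimator under complete randomization. -/
def tauHTCR {n : ℕ} (n1 : ℕ) (Y : Fin n → Fin n → Bool → Bool → ℝ)
    (z : Fin n → Bool) : ℝ :=
  (n : ℝ)⁻¹ * ∑ i, ∑ j ∈ univ.erase i,
    (indR (z i) * indR (z j) / pijCR n n1
      - (1 - indR (z i)) * (1 - indR (z j)) / qijCR n n1)
      * Y i j (z i) (z j)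

-- transfer count over functions to count over finsets
lemma card_filter_fun_eq (n : ℕ) (P : Finset (Fin n) → Prop) [DecidablePred P]
    [DecidablePred (fun z : Fin n → Bool => P (univ.filter fun k => z k = true))] :
    (univ.filter (fun z : Fin n → Bool => P (univ.filter fun k => z k = true))).card
      = (univ.filter P).card := by
  apply Finset.card_bij (fun z _ => univ.filter fun k => z k = true)
  · intro z hz
    simp only [mem_filter, mem_univ, true_and] at *
    exact hz
  · intro z1 h1 z2 h2 h
    funext k
    have := Finset.ext_iff.mp h k
    simp only [mem_filter, mem_univ, true_and] at this
    cases hz1 : z1 k <;> cases hz2 : z2 k <;> simp_all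
  · intro s hs
    refine ⟨fun k => decide (k ∈ s), ?_, ?_⟩
    · simp only [mem_filter, mem_univ, true_and] at hs ⊢
      have : (univ.filter fun k => decide (k ∈ s) = true) = s := by ext k; simp
      rw [this]; exact hs
    · ext k; simp

lemma countA (n n1 : ℕ) (hn1 : 2 ≤ n1) (i j : Fin n) (hij : i ≠ j) :
    (univ.filter (fun s : Finset (Fin n) => s.card = n1 ∧ i ∈ s ∧ j ∈ s)).card
      = (n - 2).choose (n1 - 2) := by
  have h : (univ.filter (fun s : Finset (Fin n) => s.card = n1 ∧ i ∈ s ∧ j ∈ s)).card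
      = ((((univ : Finset (Fin n)).erase i).erase j).powersetCard (n1 - 2)).card := by
    refine Finset.card_bij' (fun s _ => (s.erase i).erase j) (fun t _ => insert i (insert j t)) ?hi ?hj ?left ?right
    case hi =>
      intro s hs
      simp only [mem_filter, mem_univ, true_and] at hs
      obtain ⟨hc, hi, hj⟩ := hs
      rw [mem_powersetCard]
      constructor
      · intro k hk
        simp only [mem_erase] at hk ⊢
        exact ⟨hk.1, hk.2.1, mem_univ _⟩
      · rw [Finset.card_erase_of_mem (by simp [mem_erase, Ne.symm, hj, hij.symm]),
          Finset.card_erase_of_mem hi, hc]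
        omega
    case hj =>
      intro t ht
      rw [mem_powersetCard] at ht
      obtain ⟨hsub, hc⟩ := ht
      have hit : i ∉ t := fun h => by have := hsub h; simp [mem_erase] at this
      have hjt : j ∉ t := fun h => by have := hsub h; simp [mem_erase] at this
      simp only [mem_filter, mem_univ, true_and]
      refine ⟨?_, mem_insert_self _ _, mem_insert_of_mem (mem_insert_self _ _)⟩
      rw [Finset.card_insert_of_notMem (by simp [hit, hij]),
        Finset.card_insert_of_notMem hjt, hc]
      omega
    case left =>
      intro s hs
      show insert i (insert j ((s.erase i).erase j)) = s
      simp only [mem_filter, mem_univ, true_and] at hs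
      obtain ⟨hc, hi, hj⟩ := hs
      have hjm : j ∈ s.erase i := by simp [mem_erase, hij.symm, hj]
      rw [Finset.insert_erase hjm, Finset.insert_erase hi]
    case right =>
      intro t ht
      show ((insert i (insert j t)).erase i).erase j = t
      rw [mem_powersetCard] at ht
      have hit : i ∉ t := fun h => by have := ht.1 h; simp [mem_erase] at this
      have hjt : j ∉ t := fun h => by have := ht.1 h; simp [mem_erase] at this
      rw [Finset.erase_insert (by simp [hit, hij]), Finset.erase_insert hjt]
  rw [h, Finset.card_powersetCard, Finset.card_erase_of_mem (by simp [mem_erase, hij.symm]),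
    Finset.card_erase_of_mem (mem_univ i), Finset.card_univ, Fintype.card_fin]
  congr 1

lemma countB (n n1 : ℕ) (i j : Fin n) (hij : i ≠ j) :
    (univ.filter (fun s : Finset (Fin n) => s.card = n1 ∧ i ∉ s ∧ j ∉ s)).card
      = (n - 2).choose n1 := by
  have h : (univ.filter (fun s : Finset (Fin n) => s.card = n1 ∧ i ∉ s ∧ j ∉ s))
      = (((univ : Finset (Fin n)).erase i).erase j).powersetCard n1 := by
    ext s
    simp only [mem_filter, mem_univ, true_and, mem_powersetCard, Finset.subset_erase,
      Finset.subset_univ, true_and]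
    tauto
  rw [h, Finset.card_powersetCard, Finset.card_erase_of_mem (by simp [mem_erase, hij.symm]),
    Finset.card_erase_of_mem (mem_univ i), Finset.card_univ, Fintype.card_fin]
  congr 1

lemma natIdent (a k : ℕ) :
    (a + 2) * (a + 1) * a.choose k = (a + 2).choose (k + 2) * ((k + 2) * (k + 1)) := by
  have h1 := Nat.add_one_mul_choose_eq a k
  have h2 := Nat.add_one_mul_choose_eq (a + 1) (k + 1)
  calc (a + 2) * (a + 1) * a.choose k = (a + 2) * ((a + 1) * a.choose k) := by ring
    _ = (a + 2) * ((a + 1).choose (k + 1) * (k + 1)) := by rw [h1]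
    _ = ((a + 1 + 1) * (a + 1).choose (k + 1)) * (k + 1) := by ring
    _ = ((a + 2).choose (k + 2) * (k + 2)) * (k + 1) := by rw [h2]
    _ = _ := by ring


lemma pij_val (n n1 : ℕ) (hn1 : 2 ≤ n1) (hn2 : n1 + 2 ≤ n) :
    ((n - 2).choose (n1 - 2) : ℝ) * ((n.choose n1 : ℝ))⁻¹ = pijCR n n1 := by
  obtain ⟨k, rfl⟩ : ∃ k, n1 = k + 2 := ⟨n1 - 2, by omega⟩
  obtain ⟨a, rfl⟩ : ∃ a, n = a + 2 := ⟨n - 2, by omega⟩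
  have hka : k + 2 ≤ a := by omega
  have hc : ((a + 2).choose (k + 2) : ℝ) ≠ 0 :=
    Nat.cast_ne_zero.mpr (Nat.choose_pos (by omega)).ne'
  have hident : ((a + 2) * (a + 1) * a.choose k : ℝ)
      = ((a + 2).choose (k + 2) : ℝ) * ((k + 2) * (k + 1)) := by
    exact_mod_cast congrArg (Nat.cast : ℕ → ℝ) (natIdent a k)
  have h2 : a + 2 - 2 = a := by omega
  have h3 : k + 2 - 2 = k := by omega
  have hD : ((a : ℝ) + 2) * ((a : ℝ) + 1) ≠ 0 := by positivity
  have e4 : pijCR (a + 2) (k + 2)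
      = ((k : ℝ) + 2) * ((k : ℝ) + 1) / (((a : ℝ) + 2) * ((a : ℝ) + 1)) := by
    rw [pijCR]; push_cast; ring_nf
  rw [h2, h3, e4, ← div_eq_mul_inv, div_eq_div_iff hc hD]
  linear_combination hident

lemma qij_val (n n1 : ℕ) (hn1 : 2 ≤ n1) (hn2 : n1 + 2 ≤ n) :
    ((n - 2).choose n1 : ℝ) * ((n.choose n1 : ℝ))⁻¹ = qijCR n n1 := by
  obtain ⟨k, rfl⟩ : ∃ k, n1 = k + 2 := ⟨n1 - 2, by omega⟩
  obtain ⟨b, rfl⟩ : ∃ b, n = k + b + 4 := ⟨n - k - 4, by omega⟩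
  have hident0 := natIdent (k + b + 2) b
  have e1 : (k + b + 2).choose b = (k + b + 2).choose (k + 2) := by
    rw [← Nat.choose_symm (by omega : k + 2 ≤ k + b + 2)]
    congr 1
    omega
  have e2 : (k + b + 2 + 2).choose (b + 2) = (k + b + 4).choose (k + 2) := by
    rw [← Nat.choose_symm (by omega : k + 2 ≤ k + b + 4)]
    congr 1
    omega
  rw [e1, e2] at hident0
  have hident : ((k + b + 4) * (k + b + 3) * ((k + b + 2).choose (k + 2)) : ℝ)
      = ((k + b + 4).choose (k + 2) : ℝ) * ((b + 2) * (b + 1)) := by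
    have : (k + b + 2 + 2) * (k + b + 2 + 1) * ((k + b + 2).choose (k + 2))
        = (k + b + 4).choose (k + 2) * ((b + 2) * (b + 1)) := hident0
    exact_mod_cast congrArg (Nat.cast : ℕ → ℝ) this
  have hc : ((k + b + 4).choose (k + 2) : ℝ) ≠ 0 :=
    Nat.cast_ne_zero.mpr (Nat.choose_pos (by omega)).ne'
  have h2 : k + b + 4 - 2 = k + b + 2 := by omega
  have hD : ((k : ℝ) + (b : ℝ) + 4) * ((k : ℝ) + (b : ℝ) + 3) ≠ 0 := by positivity
  have e4 : qijCR (k + b + 4) (k + 2)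
      = ((b : ℝ) + 2) * ((b : ℝ) + 1) / (((k : ℝ) + (b : ℝ) + 4) * ((k : ℝ) + (b : ℝ) + 3)) := by
    rw [qijCR]; push_cast; ring_nf
  rw [h2, e4, ← div_eq_mul_inv, div_eq_div_iff hc hD]
  linear_combination hident

lemma pij_pos (n n1 : ℕ) (hn1 : 2 ≤ n1) (hn2 : n1 + 2 ≤ n) : pijCR n n1 ≠ 0 := by
  have h1 : (2 : ℝ) ≤ (n1 : ℝ) := by exact_mod_cast hn1
  have h2 : (4 : ℝ) ≤ (n : ℝ) := by exact_mod_cast (by omega : 4 ≤ n)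
  have : 0 < pijCR n n1 := by
    rw [pijCR]
    apply div_pos <;> nlinarith
  exact this.ne'

lemma qij_pos (n n1 : ℕ) (hn1 : 2 ≤ n1) (hn2 : n1 + 2 ≤ n) : qijCR n n1 ≠ 0 := by
  have h1 : (n1 : ℝ) + 2 ≤ (n : ℝ) := by exact_mod_cast hn2
  have h2 : (4 : ℝ) ≤ (n : ℝ) := by exact_mod_cast (by omega : 4 ≤ n)
  have h3 : (0 : ℝ) ≤ (n1 : ℝ) := Nat.cast_nonneg _
  have : 0 < qijCR n n1 := by
    rw [qijCR]
    apply div_pos <;> nlinarith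
  exact this.ne'

lemma prob_tt (n n1 : ℕ) (hn1 : 2 ≤ n1) (hn2 : n1 + 2 ≤ n) (i j : Fin n) (hij : i ≠ j) :
    ∑ z : Fin n → Bool, (if z i = true ∧ z j = true then crWeight n n1 z else 0)
      = pijCR n n1 := by
  have hstep : ∀ z : Fin n → Bool,
      (if z i = true ∧ z j = true then crWeight n n1 z else 0)
        = if ((univ.filter fun k => z k = true).card = n1 ∧ i ∈ (univ.filter fun k => z k = true)
            ∧ j ∈ (univ.filter fun k => z k = true))
          then ((n.choose n1 : ℝ))⁻¹ else 0 := by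
    intro z
    simp only [crWeight, mem_filter, mem_univ, true_and]
    split_ifs <;> tauto
  rw [Finset.sum_congr rfl (fun z _ => hstep z), ← Finset.sum_filter, Finset.sum_const,
    nsmul_eq_mul, card_filter_fun_eq n
      (fun s => s.card = n1 ∧ i ∈ s ∧ j ∈ s), countA n n1 hn1 i j hij]
  exact pij_val n n1 hn1 hn2

lemma prob_ff (n n1 : ℕ) (hn1 : 2 ≤ n1) (hn2 : n1 + 2 ≤ n) (i j : Fin n) (hij : i ≠ j) :
    ∑ z : Fin n → Bool, (if z i = false ∧ z j = false then crWeight n n1 z else 0)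
      = qijCR n n1 := by
  have hstep : ∀ z : Fin n → Bool,
      (if z i = false ∧ z j = false then crWeight n n1 z else 0)
        = if ((univ.filter fun k => z k = true).card = n1 ∧ i ∉ (univ.filter fun k => z k = true)
            ∧ j ∉ (univ.filter fun k => z k = true))
          then ((n.choose n1 : ℝ))⁻¹ else 0 := by
    intro z
    simp only [crWeight, mem_filter, mem_univ, true_and, Bool.not_eq_true]
    split_ifs <;> simp_all
  rw [Finset.sum_congr rfl (fun z _ => hstep z), ← Finset.sum_filter, Finset.sum_const,
    nsmul_eq_mul, card_filter_fun_eq n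
      (fun s => s.card = n1 ∧ i ∉ s ∧ j ∉ s), countB n n1 i j hij]
  exact qij_val n n1 hn1 hn2

/-- under complete randomization with 2 ≤ n₁ ≤ n−2 and dyadic interference,
the Horvitz–Thompson estimator is unbiased for the global average treatment effect. -/
theorem statement3 (n n1 : ℕ) (hn1 : 2 ≤ n1) (hn2 : n1 + 2 ≤ n)
    (Y : Fin n → Fin n → Bool → Bool → ℝ) :
    expec (crWeight n n1) (tauHTCR n1 Y) = gate Y := by
  have key : ∀ i : Fin n, ∀ j ∈ univ.erase i,
      ∑ z : Fin n → Bool, crWeight n n1 z *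
        ((indR (z i) * indR (z j) / pijCR n n1
          - (1 - indR (z i)) * (1 - indR (z j)) / qijCR n n1) * Y i j (z i) (z j))
      = Y i j true true - Y i j false false := by
    intro i j hj
    have hij : i ≠ j := ((Finset.mem_erase.mp hj).1).symm
    have hp := pij_pos n n1 hn1 hn2
    have hq := qij_pos n n1 hn1 hn2
    have hdecomp : ∀ z : Fin n → Bool, crWeight n n1 z *
        ((indR (z i) * indR (z j) / pijCR n n1
          - (1 - indR (z i)) * (1 - indR (z j)) / qijCR n n1) * Y i j (z i) (z j))
        = (pijCR n n1)⁻¹ * Y i j true true *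
            (if z i = true ∧ z j = true then crWeight n n1 z else 0)
          - (qijCR n n1)⁻¹ * Y i j false false *
            (if z i = false ∧ z j = false then crWeight n n1 z else 0) := by
      intro z
      cases hzi : z i <;> cases hzj : z j <;> simp [hzi, hzj, indR] <;> ring
    rw [Finset.sum_congr rfl (fun z _ => hdecomp z), Finset.sum_sub_distrib,
      ← Finset.mul_sum, ← Finset.mul_sum, prob_tt n n1 hn1 hn2 i j hij,
      prob_ff n n1 hn1 hn2 i j hij]
    field_simp
  have step1 : ∀ z : Fin n → Bool, crWeight n n1 z * tauHTCR n1 Y z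
      = (n : ℝ)⁻¹ * ∑ i, ∑ j ∈ univ.erase i, crWeight n n1 z *
          ((indR (z i) * indR (z j) / pijCR n n1
            - (1 - indR (z i)) * (1 - indR (z j)) / qijCR n n1) * Y i j (z i) (z j)) := by
    intro z
    simp only [tauHTCR]
    rw [mul_left_comm]
    congr 1
    rw [Finset.mul_sum]
    refine Finset.sum_congr rfl fun i _ => ?_
    rw [Finset.mul_sum]
  rw [expec, Finset.sum_congr rfl (fun z _ => step1 z), ← Finset.mul_sum, gate]
  congr 1
  rw [Finset.sum_comm]
  refine Finset.sum_congr rfl fun i _ => ?_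
  rw [Finset.sum_comm]
  exact Finset.sum_congr rfl (key i)
end
end

section
/- Under Bernoulli randomization and dyadic interference, the variance of the Horvitz–Thompson estimator equals var(τ̂_HT) = n^{-2} Σ_i Σ_{j≠i} [ (1/2){ S_ij(1,1)²/p_ij + S_ij(0,0)²/q_ij − (τ_ij + τ_ji)² } + Σ_{k∉{i,j}} { S_ij(1,1)S_ik(1,1)/p_i + S_ij(0,0)S_ik(0,0)/q_i − (τ_ij + τ_ji)(τ_ik + τ_ki) } ]. -/
open Finset
open scoped Classical

noncomputable section

/-- The dyadic treatment effect τ_ij = Y_ij(1,1) − Y_ij(0,0). -/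
def tij {n : ℕ} (Y : Fin n → Fin n → Bool → Bool → ℝ) (i j : Fin n) : ℝ :=
  Y i j true true - Y i j false false

/-- S_ij(z,z') = Y_ij(z,z') + Y_ji(z',z). -/
def Spot {n : ℕ} (Y : Fin n → Fin n → Bool → Bool → ℝ) (i j : Fin n)
    (zi zj : Bool) : ℝ :=
  Y i j zi zj + Y j i zj zi

namespace S4


variable {n : ℕ}

lemma sum_pi_bool (G : Fin n → Bool → ℝ) :
    ∑ z : Fin n → Bool, ∏ i, G i (z i) = ∏ i, (G i true + G i false) := by
  rw [← Fintype.prod_sum]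
  exact Finset.prod_congr rfl fun i _ => by simp [Fintype.sum_bool]

/-- monomial in indicators -/
def Mon (s t : Finset (Fin n)) (z : Fin n → Bool) : ℝ :=
  (∏ m ∈ s, indR (z m)) * ∏ m ∈ t, (1 - indR (z m))

lemma prod_ite_univ (s t : Finset (Fin n)) (hst : Disjoint s t) (f g : Fin n → ℝ) :
    ∏ i, (if i ∈ s then f i else if i ∈ t then g i else 1)
      = (∏ i ∈ s, f i) * ∏ i ∈ t, g i := by
  classical
  have h1 : ∏ i ∈ univ, (if i ∈ s then f i else if i ∈ t then g i else 1)
      = ∏ i ∈ s ∪ t, (if i ∈ s then f i else if i ∈ t then g i else 1) := by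
    refine (prod_subset (subset_univ _) ?_).symm
    intro x _ hx
    simp only [mem_union, not_or] at hx
    simp [hx.1, hx.2]
  rw [h1, prod_union hst]
  congr 1
  · exact prod_congr rfl fun x hx => by simp [hx]
  · refine prod_congr rfl fun x hx => ?_
    have hxs : x ∉ s := fun h => (disjoint_left.mp hst h hx)
    simp [hx, hxs]

lemma expec_mon (p : Fin n → ℝ) (s t : Finset (Fin n)) (hst : Disjoint s t) :
    expec (bernWeight p) (Mon s t) = (∏ m ∈ s, p m) * ∏ m ∈ t, (1 - p m) := by
  classical
  have key : ∀ z : Fin n → Bool,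
      bernWeight p z * Mon s t z
        = ∏ i, ((if z i then p i else 1 - p i) *
            (if i ∈ s then indR (z i) else if i ∈ t then 1 - indR (z i) else 1)) := by
    intro z
    rw [prod_mul_distrib,
      prod_ite_univ s t hst (fun i => indR (z i)) (fun i => 1 - indR (z i))]
    rfl
  rw [expec]
  simp only [key]
  rw [sum_pi_bool (fun i b => (if b then p i else 1 - p i) *
      (if i ∈ s then indR b else if i ∈ t then 1 - indR b else 1))]
  rw [← prod_ite_univ s t hst p (fun i => 1 - p i)]
  refine Finset.prod_congr rfl fun i _ => ?_
  by_cases hs : i ∈ s <;> by_cases ht : i ∈ t <;> simp [hs, ht, indR]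

lemma expec_one (p : Fin n → ℝ) : expec (bernWeight p) (fun _ => 1) = 1 := by
  have h := expec_mon p ∅ ∅ (by simp)
  have h2 : Mon (∅ : Finset (Fin n)) ∅ = fun _ => (1:ℝ) := funext fun z => by simp [Mon]
  rw [h2] at h
  simpa using h

lemma expec_sum {ι : Type*} (w : (Fin n → Bool) → ℝ) (s : Finset ι)
    (F : ι → (Fin n → Bool) → ℝ) :
    expec w (fun z => ∑ i ∈ s, F i z) = ∑ i ∈ s, expec w (F i) := by
  simp only [expec, Finset.mul_sum]
  exact Finset.sum_comm

lemma expec_lin2 (w : (Fin n → Bool) → ℝ) (c1 c2 : ℝ) (f1 f2 : (Fin n → Bool) → ℝ) :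
    expec w (fun z => c1 * f1 z + c2 * f2 z) = c1 * expec w f1 + c2 * expec w f2 := by
  have h : ∀ z, w z * (c1 * f1 z + c2 * f2 z) = c1 * (w z * f1 z) + c2 * (w z * f2 z) :=
    fun z => by ring
  simp only [expec, h, Finset.sum_add_distrib, Finset.mul_sum]

lemma expec_lin3 (w : (Fin n → Bool) → ℝ) (c1 c2 c3 : ℝ) (f1 f2 f3 : (Fin n → Bool) → ℝ) :
    expec w (fun z => c1 * f1 z + c2 * f2 z + c3 * f3 z)
      = c1 * expec w f1 + c2 * expec w f2 + c3 * expec w f3 := by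
  have h : ∀ z, w z * (c1 * f1 z + c2 * f2 z + c3 * f3 z)
      = c1 * (w z * f1 z) + c2 * (w z * f2 z) + c3 * (w z * f3 z) := fun z => by ring
  simp only [expec, h, Finset.sum_add_distrib, Finset.mul_sum]

lemma expec_lin4 (w : (Fin n → Bool) → ℝ) (c1 c2 c3 c4 : ℝ)
    (f1 f2 f3 f4 : (Fin n → Bool) → ℝ) :
    expec w (fun z => c1 * f1 z + c2 * f2 z + c3 * f3 z + c4 * f4 z)
      = c1 * expec w f1 + c2 * expec w f2 + c3 * expec w f3 + c4 * expec w f4 := by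
  have h : ∀ z, w z * (c1 * f1 z + c2 * f2 z + c3 * f3 z + c4 * f4 z)
      = c1 * (w z * f1 z) + c2 * (w z * f2 z) + c3 * (w z * f3 z) + c4 * (w z * f4 z) :=
    fun z => by ring
  simp only [expec, h, Finset.sum_add_distrib, Finset.mul_sum]



/-- canonical dyad term -/
def Tcan (p : Fin n → ℝ) (i j : Fin n) (A B : ℝ) (z : Fin n → Bool) : ℝ :=
  indR (z i) * indR (z j) / (p i * p j) * A
    - (1 - indR (z i)) * (1 - indR (z j)) / ((1 - p i) * (1 - p j)) * B

lemma indR_true : indR true = 1 := rfl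
lemma indR_false : indR false = 0 := rfl

lemma Tcan_comm (p : Fin n → ℝ) (i j : Fin n) (A B : ℝ) :
    Tcan p j i A B = Tcan p i j A B := by
  funext z; unfold Tcan; ring

section
variable (p : Fin n → ℝ) (hp : ∀ i, p i ∈ Set.Ioo (0 : ℝ) 1)
include hp

lemma E_T {i j : Fin n} (hij : i ≠ j) (A B : ℝ) :
    expec (bernWeight p) (Tcan p i j A B) = A - B := by
  have hpt : ∀ m, p m ≠ 0 := fun m => (hp m).1.ne'
  have hqt : ∀ m, (1 : ℝ) - p m ≠ 0 := fun m => sub_ne_zero.2 (hp m).2.ne'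
  have key : Tcan p i j A B = fun z =>
      A / (p i * p j) * Mon {i, j} ∅ z
        + (-B / ((1 - p i) * (1 - p j))) * Mon ∅ {i, j} z := by
    funext z
    simp only [Tcan, Mon, Finset.prod_pair hij, Finset.prod_empty]
    ring
  rw [key, expec_lin2, expec_mon p {i,j} ∅ (by simp), expec_mon p ∅ {i,j} (by simp),
    Finset.prod_pair hij, Finset.prod_pair hij, Finset.prod_empty]
  simp only [Finset.prod_empty]
  have hqi := hqt i; have hqj := hqt j
  generalize (1:ℝ) - p i = qi at hqi ⊢
  generalize (1:ℝ) - p j = qj at hqj ⊢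
  have hpi := hpt i; have hpj := hpt j
  field_simp
  try ring

lemma E_TT_same {i j : Fin n} (hij : i ≠ j) (A B A' B' : ℝ) :
    expec (bernWeight p) (fun z => Tcan p i j A B z * Tcan p i j A' B' z)
      = A * A' / (p i * p j) + B * B' / ((1 - p i) * (1 - p j)) := by
  have hpt : ∀ m, p m ≠ 0 := fun m => (hp m).1.ne'
  have hqt : ∀ m, (1 : ℝ) - p m ≠ 0 := fun m => sub_ne_zero.2 (hp m).2.ne'
  have key : (fun z => Tcan p i j A B z * Tcan p i j A' B' z) = fun z =>
      (A * A' / ((p i * p j) ^ 2)) * Mon {i, j} ∅ z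
        + (B * B' / (((1 - p i) * (1 - p j)) ^ 2)) * Mon ∅ {i, j} z := by
    funext z
    simp only [Tcan, Mon, Finset.prod_pair hij, Finset.prod_empty]
    generalize (1:ℝ) - p i = qi
    generalize (1:ℝ) - p j = qj
    cases hzi : z i <;> cases hzj : z j <;> simp only [indR_true, indR_false] <;> ring
  rw [key, expec_lin2, expec_mon p {i,j} ∅ (by simp), expec_mon p ∅ {i,j} (by simp),
    Finset.prod_pair hij, Finset.prod_pair hij, Finset.prod_empty]
  simp only [Finset.prod_empty]
  have hqi := hqt i; have hqj := hqt j
  generalize (1:ℝ) - p i = qi at hqi ⊢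
  generalize (1:ℝ) - p j = qj at hqj ⊢
  have hpi := hpt i; have hpj := hpt j
  field_simp
  try ring

lemma E_TT_share {i j m : Fin n} (hij : i ≠ j) (him : i ≠ m) (hjm : j ≠ m)
    (A B A' B' : ℝ) :
    expec (bernWeight p) (fun z => Tcan p i j A B z * Tcan p i m A' B' z)
      = A * A' / p i + B * B' / (1 - p i) := by
  have hpt : ∀ m, p m ≠ 0 := fun m => (hp m).1.ne'
  have hqt : ∀ m, (1 : ℝ) - p m ≠ 0 := fun m => sub_ne_zero.2 (hp m).2.ne'
  have hmem : i ∉ ({j, m} : Finset (Fin n)) := by simp [hij, him]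
  have key : (fun z => Tcan p i j A B z * Tcan p i m A' B' z) = fun z =>
      (A * A' / ((p i * p j) * (p i * p m))) * Mon {i, j, m} ∅ z
        + (B * B' / (((1 - p i) * (1 - p j)) * ((1 - p i) * (1 - p m))))
            * Mon ∅ {i, j, m} z := by
    funext z
    simp only [Tcan, Mon, Finset.prod_insert hmem, Finset.prod_pair hjm,
      Finset.prod_empty]
    generalize (1:ℝ) - p i = qi
    generalize (1:ℝ) - p j = qj
    generalize (1:ℝ) - p m = qm
    cases hzi : z i <;> cases hzj : z j <;> cases hzm : z m <;> simp only [indR_true, indR_false] <;> ring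
  rw [key, expec_lin2, expec_mon p {i,j,m} ∅ (by simp), expec_mon p ∅ {i,j,m} (by simp),
    Finset.prod_insert hmem, Finset.prod_pair hjm, Finset.prod_insert hmem,
    Finset.prod_pair hjm, Finset.prod_empty]
  simp only [Finset.prod_empty]
  have hqi := hqt i; have hqj := hqt j; have hqm := hqt m
  generalize (1:ℝ) - p i = qi at hqi ⊢
  generalize (1:ℝ) - p j = qj at hqj ⊢
  generalize (1:ℝ) - p m = qm at hqm ⊢
  have hpi := hpt i; have hpj := hpt j; have hpm := hpt m
  field_simp

lemma E_TT_disj {i j k l : Fin n} (hij : i ≠ j) (hkl : k ≠ l)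
    (hik : i ≠ k) (hil : i ≠ l) (hjk : j ≠ k) (hjl : j ≠ l) (A B A' B' : ℝ) :
    expec (bernWeight p) (fun z => Tcan p i j A B z * Tcan p k l A' B' z)
      = (A - B) * (A' - B') := by
  have hpt : ∀ m, p m ≠ 0 := fun m => (hp m).1.ne'
  have hqt : ∀ m, (1 : ℝ) - p m ≠ 0 := fun m => sub_ne_zero.2 (hp m).2.ne'
  have h1 : i ∉ ({j, k, l} : Finset (Fin n)) := by simp [hij, hik, hil]
  have h2 : j ∉ ({k, l} : Finset (Fin n)) := by simp [hjk, hjl]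
  have hd : Disjoint ({i, j} : Finset (Fin n)) {k, l} := by
    simp [Finset.disjoint_left, hik, hil, hjk, hjl]
  have key : (fun z => Tcan p i j A B z * Tcan p k l A' B' z) = fun z =>
      (A * A' / ((p i * p j) * (p k * p l))) * Mon {i, j, k, l} ∅ z
        + (-(A * B') / ((p i * p j) * ((1 - p k) * (1 - p l)))) * Mon {i, j} {k, l} z
        + (-(B * A') / (((1 - p i) * (1 - p j)) * (p k * p l))) * Mon {k, l} {i, j} z
        + (B * B' / (((1 - p i) * (1 - p j)) * ((1 - p k) * (1 - p l))))
            * Mon ∅ {i, j, k, l} z := by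
    funext z
    simp only [Tcan, Mon, Finset.prod_insert h1, Finset.prod_insert h2,
      Finset.prod_pair hkl, Finset.prod_pair hij, Finset.prod_empty]
    generalize (1:ℝ) - p i = qi
    generalize (1:ℝ) - p j = qj
    generalize (1:ℝ) - p k = qk
    generalize (1:ℝ) - p l = ql
    ring
  rw [key, expec_lin4, expec_mon p {i,j,k,l} ∅ (by simp),
    expec_mon p {i,j} {k,l} hd, expec_mon p {k,l} {i,j} hd.symm,
    expec_mon p ∅ {i,j,k,l} (by simp),
    Finset.prod_insert h1, Finset.prod_insert h2, Finset.prod_pair hkl,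
    Finset.prod_insert h1, Finset.prod_insert h2, Finset.prod_pair hkl,
    Finset.prod_pair hij, Finset.prod_pair hij, Finset.prod_empty]
  simp only [Finset.prod_empty]
  have hqi := hqt i; have hqj := hqt j; have hqk := hqt k; have hql := hqt l
  generalize (1:ℝ) - p i = qi at hqi ⊢
  generalize (1:ℝ) - p j = qj at hqj ⊢
  generalize (1:ℝ) - p k = qk at hqk ⊢
  generalize (1:ℝ) - p l = ql at hql ⊢
  have hpi := hpt i; have hpj := hpt j; have hpk := hpt k; have hpl := hpt l
  field_simp
  ring

end

lemma sum_pairs_swap (f : Fin n → Fin n → ℝ) :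
    ∑ i, ∑ j ∈ univ.erase i, f i j = ∑ i, ∑ j ∈ univ.erase i, f j i := by
  have h : ∀ g : Fin n → Fin n → ℝ,
      (∑ i, ∑ j ∈ univ.erase i, g i j) = ∑ i, ∑ j, if j ≠ i then g i j else 0 := by
    intro g
    refine Finset.sum_congr rfl fun i _ => ?_
    rw [← Finset.filter_ne' univ i, Finset.sum_filter]
  rw [h, h, Finset.sum_comm]
  refine Finset.sum_congr rfl fun i _ => Finset.sum_congr rfl fun j _ => ?_
  exact if_congr ne_comm rfl rfl

lemma sum_triples_swap (f : Fin n → Fin n → Fin n → ℝ) :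
    ∑ i, ∑ j ∈ univ.erase i, ∑ m ∈ (univ.erase i).erase j, f i j m
      = ∑ i, ∑ j ∈ univ.erase i, ∑ m ∈ (univ.erase i).erase j, f j i m := by
  have h : ∀ g : Fin n → Fin n → Fin n → ℝ,
      (∑ i, ∑ j ∈ univ.erase i, ∑ m ∈ (univ.erase i).erase j, g i j m)
        = ∑ i, ∑ j, ∑ m, if j ≠ i ∧ m ≠ i ∧ m ≠ j then g i j m else 0 := by
    intro g
    refine Finset.sum_congr rfl fun i _ => ?_
    have hset : ∀ j, (univ.erase i).erase j = univ.filter (fun m => m ≠ i ∧ m ≠ j) :=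
      fun j => by ext x; simp [and_comm]
    calc ∑ j ∈ univ.erase i, ∑ m ∈ (univ.erase i).erase j, g i j m
        = ∑ j ∈ univ.erase i, ∑ m, if m ≠ i ∧ m ≠ j then g i j m else 0 := by
          refine Finset.sum_congr rfl fun j _ => ?_
          rw [hset j, Finset.sum_filter]
      _ = ∑ j, if j ≠ i then (∑ m, if m ≠ i ∧ m ≠ j then g i j m else 0) else 0 := by
          rw [← Finset.filter_ne' univ i, Finset.sum_filter]
      _ = ∑ j, ∑ m, if j ≠ i ∧ m ≠ i ∧ m ≠ j then g i j m else 0 := by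
          refine Finset.sum_congr rfl fun j _ => ?_
          by_cases hji : j ≠ i
          · rw [if_pos hji]
            refine Finset.sum_congr rfl fun m _ => ?_
            simp [hji]
          · rw [if_neg hji]
            symm
            refine Finset.sum_eq_zero fun m _ => ?_
            simp [hji]
  rw [h, h, Finset.sum_comm]
  refine Finset.sum_congr rfl fun i _ => Finset.sum_congr rfl fun j _ =>
    Finset.sum_congr rfl fun m _ => ?_
  refine if_congr ?_ rfl rfl
  constructor
  · rintro ⟨a1, a2, a3⟩; exact ⟨a1.symm, a3, a2⟩
  · rintro ⟨a1, a2, a3⟩; exact ⟨a1.symm, a3, a2⟩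

lemma partition_kl {i j : Fin n} (hij : i ≠ j) (C : Fin n → Fin n → ℝ)
    (h0 : ∀ k l, k ≠ l → k ≠ i → k ≠ j → l ≠ i → l ≠ j → C k l = 0) :
    ∑ k, ∑ l ∈ univ.erase k, C k l
      = C i j + C j i
        + ∑ m ∈ (univ.erase i).erase j, (C i m + C j m + C m i + C m j) := by
  classical
  set R := (univ.erase i).erase j with hR
  have hjR : j ∉ R := Finset.notMem_erase _ _
  have hiR : i ∉ R := by
    intro h
    exact Finset.notMem_erase i univ (Finset.mem_erase.mp h).2
  have hins1 : insert j R = univ.erase i :=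
    Finset.insert_erase (Finset.mem_erase.mpr ⟨hij.symm, Finset.mem_univ j⟩)
  have hins2 : insert i (univ.erase i) = univ := Finset.insert_erase (Finset.mem_univ i)
  have hins3 : insert i R = univ.erase j := by
    rw [hR, Finset.erase_right_comm]
    exact Finset.insert_erase (Finset.mem_erase.mpr ⟨hij, Finset.mem_univ i⟩)
  have hiIns : i ∉ insert j R := by
    simp only [Finset.mem_insert]
    push_neg
    exact ⟨hij, hiR⟩
  have e1 : (∑ k, ∑ l ∈ univ.erase k, C k l)
      = (∑ l ∈ univ.erase i, C i l) + ((∑ l ∈ univ.erase j, C j l)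
          + ∑ k ∈ R, ∑ l ∈ univ.erase k, C k l) := by
    rw [← hins2, ← hins1, Finset.sum_insert hiIns, Finset.sum_insert hjR]
  have e2 : ∑ l ∈ univ.erase i, C i l = C i j + ∑ l ∈ R, C i l := by
    rw [← hins1, Finset.sum_insert hjR]
  have e3 : ∑ l ∈ univ.erase j, C j l = C j i + ∑ l ∈ R, C j l := by
    rw [← hins3, Finset.sum_insert hiR]
  have e4 : ∑ k ∈ R, ∑ l ∈ univ.erase k, C k l = ∑ k ∈ R, (C k i + C k j) := by
    refine Finset.sum_congr rfl fun k hk => ?_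
    have hki : k ≠ i := (Finset.mem_erase.mp (Finset.mem_erase.mp hk).2).1
    have hkj : k ≠ j := (Finset.mem_erase.mp hk).1
    have hjmem : j ∈ (univ.erase k).erase i :=
      Finset.mem_erase.mpr ⟨hij.symm, Finset.mem_erase.mpr ⟨hkj.symm, Finset.mem_univ j⟩⟩
    have himem : i ∈ univ.erase k := Finset.mem_erase.mpr ⟨hki.symm, Finset.mem_univ i⟩
    have hins4 : insert j (((univ.erase k).erase i).erase j) = (univ.erase k).erase i :=
      Finset.insert_erase hjmem
    have hins5 : insert i ((univ.erase k).erase i) = univ.erase k :=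
      Finset.insert_erase himem
    have hinotin : i ∉ insert j (((univ.erase k).erase i).erase j) := by
      simp only [Finset.mem_insert]
      push_neg
      refine ⟨hij, fun hmem => ?_⟩
      exact Finset.notMem_erase i (univ.erase k)
        (Finset.mem_erase.mp hmem).2
    have hjnotin : j ∉ ((univ.erase k).erase i).erase j := Finset.notMem_erase _ _
    rw [← hins5, ← hins4, Finset.sum_insert hinotin, Finset.sum_insert hjnotin]
    have hz : ∑ l ∈ ((univ.erase k).erase i).erase j, C k l = 0 := by
      refine Finset.sum_eq_zero fun l hl => ?_
      have hlj : l ≠ j := (Finset.mem_erase.mp hl).1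
      have hli : l ≠ i := (Finset.mem_erase.mp (Finset.mem_erase.mp hl).2).1
      have hlk : l ≠ k :=
        (Finset.mem_erase.mp (Finset.mem_erase.mp (Finset.mem_erase.mp hl).2).2).1
      exact h0 k l (fun h => hlk h.symm) hki hkj hli hlj
    rw [hz]
    ring
  rw [e1, e2, e3, e4]
  simp only [Finset.sum_add_distrib]
  ring


def Dex (p : Fin n → ℝ) (a b : Fin n → Fin n → ℝ) (i j : Fin n) : ℝ :=
  (a i j * a i j / (p i * p j) + b i j * b i j / ((1 - p i) * (1 - p j))
      - (a i j - b i j) * (a i j - b i j))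
    + (a i j * a j i / (p i * p j) + b i j * b j i / ((1 - p i) * (1 - p j))
      - (a i j - b i j) * (a j i - b j i))

def G1ex (p : Fin n → ℝ) (a b : Fin n → Fin n → ℝ) (i j m : Fin n) : ℝ :=
  (a i j * a i m / p i + b i j * b i m / (1 - p i) - (a i j - b i j) * (a i m - b i m))
    + (a i j * a m i / p i + b i j * b m i / (1 - p i) - (a i j - b i j) * (a m i - b m i))

def G2ex (p : Fin n → ℝ) (a b : Fin n → Fin n → ℝ) (i j m : Fin n) : ℝ :=
  (a i j * a j m / p j + b i j * b j m / (1 - p j) - (a i j - b i j) * (a j m - b j m))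
    + (a i j * a m j / p j + b i j * b m j / (1 - p j) - (a i j - b i j) * (a m j - b m j))

lemma cov_sum (p : Fin n → ℝ) (hp : ∀ i, p i ∈ Set.Ioo (0 : ℝ) 1)
    (a b : Fin n → Fin n → ℝ) :
    ∑ i, ∑ j ∈ univ.erase i, ∑ k, ∑ l ∈ univ.erase k,
      (expec (bernWeight p)
          (fun z => Tcan p i j (a i j) (b i j) z * Tcan p k l (a k l) (b k l) z)
        - (a i j - b i j) * (a k l - b k l))
    = ∑ i, ∑ j ∈ univ.erase i,
        ((1 / 2) * ((a i j + a j i) ^ 2 / (p i * p j)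
            + (b i j + b j i) ^ 2 / ((1 - p i) * (1 - p j))
            - ((a i j - b i j) + (a j i - b j i)) ^ 2)
          + ∑ m ∈ (univ.erase i).erase j,
            ((a i j + a j i) * (a i m + a m i) / p i
              + (b i j + b j i) * (b i m + b m i) / (1 - p i)
              - ((a i j - b i j) + (a j i - b j i)) * ((a i m - b i m) + (a m i - b m i)))) := by
  classical
  have step1 : ∑ i, ∑ j ∈ univ.erase i, ∑ k, ∑ l ∈ univ.erase k,
      (expec (bernWeight p)
          (fun z => Tcan p i j (a i j) (b i j) z * Tcan p k l (a k l) (b k l) z)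
        - (a i j - b i j) * (a k l - b k l))
      = ∑ i, ∑ j ∈ univ.erase i,
          (Dex p a b i j + ∑ m ∈ (univ.erase i).erase j,
            (G1ex p a b i j m + G2ex p a b i j m)) := by
    refine Finset.sum_congr rfl fun i _ => Finset.sum_congr rfl fun j hj => ?_
    have hji : j ≠ i := (Finset.mem_erase.mp hj).1
    have hij : i ≠ j := hji.symm
    have h0 : ∀ k l, k ≠ l → k ≠ i → k ≠ j → l ≠ i → l ≠ j →
        (expec (bernWeight p)
            (fun z => Tcan p i j (a i j) (b i j) z * Tcan p k l (a k l) (b k l) z)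
          - (a i j - b i j) * (a k l - b k l)) = 0 := by
      intro k l hkl hki hkj hli hlj
      rw [E_TT_disj p hp hij hkl hki.symm hli.symm hkj.symm hlj.symm]
      ring
    refine (partition_kl hij _ h0).trans ?_
    have h1 : (expec (bernWeight p)
          (fun z => Tcan p i j (a i j) (b i j) z * Tcan p i j (a i j) (b i j) z)
        - (a i j - b i j) * (a i j - b i j))
        + (expec (bernWeight p)
          (fun z => Tcan p i j (a i j) (b i j) z * Tcan p j i (a j i) (b j i) z)
        - (a i j - b i j) * (a j i - b j i)) = Dex p a b i j := by
      rw [Tcan_comm p i j (a j i) (b j i), E_TT_same p hp hij, E_TT_same p hp hij]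
      rw [Dex]
    have h2 : ∑ m ∈ (univ.erase i).erase j,
        ((expec (bernWeight p)
            (fun z => Tcan p i j (a i j) (b i j) z * Tcan p i m (a i m) (b i m) z)
          - (a i j - b i j) * (a i m - b i m))
        + (expec (bernWeight p)
            (fun z => Tcan p i j (a i j) (b i j) z * Tcan p j m (a j m) (b j m) z)
          - (a i j - b i j) * (a j m - b j m))
        + (expec (bernWeight p)
            (fun z => Tcan p i j (a i j) (b i j) z * Tcan p m i (a m i) (b m i) z)
          - (a i j - b i j) * (a m i - b m i))
        + (expec (bernWeight p)
            (fun z => Tcan p i j (a i j) (b i j) z * Tcan p m j (a m j) (b m j) z)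
          - (a i j - b i j) * (a m j - b m j)))
        = ∑ m ∈ (univ.erase i).erase j, (G1ex p a b i j m + G2ex p a b i j m) := by
      refine Finset.sum_congr rfl fun m hm => ?_
      have hmj : m ≠ j := (Finset.mem_erase.mp hm).1
      have hmi : m ≠ i := (Finset.mem_erase.mp (Finset.mem_erase.mp hm).2).1
      have t1 : expec (bernWeight p)
          (fun z => Tcan p i j (a i j) (b i j) z * Tcan p i m (a i m) (b i m) z)
          = a i j * a i m / p i + b i j * b i m / (1 - p i) :=
        E_TT_share p hp hij hmi.symm hmj.symm _ _ _ _
      have t2 : expec (bernWeight p)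
          (fun z => Tcan p i j (a i j) (b i j) z * Tcan p j m (a j m) (b j m) z)
          = a i j * a j m / p j + b i j * b j m / (1 - p j) := by
        rw [← Tcan_comm p i j (a i j) (b i j)]
        exact E_TT_share p hp hji hmj.symm hmi.symm _ _ _ _
      have t3 : expec (bernWeight p)
          (fun z => Tcan p i j (a i j) (b i j) z * Tcan p m i (a m i) (b m i) z)
          = a i j * a m i / p i + b i j * b m i / (1 - p i) := by
        rw [Tcan_comm p i m (a m i) (b m i)]
        exact E_TT_share p hp hij hmi.symm hmj.symm _ _ _ _
      have t4 : expec (bernWeight p)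
          (fun z => Tcan p i j (a i j) (b i j) z * Tcan p m j (a m j) (b m j) z)
          = a i j * a m j / p j + b i j * b m j / (1 - p j) := by
        rw [← Tcan_comm p i j (a i j) (b i j), Tcan_comm p j m (a m j) (b m j)]
        exact E_TT_share p hp hji hmj.symm hmi.symm _ _ _ _
      rw [t1, t2, t3, t4, G1ex, G2ex]
      ring
    rw [h1, h2]
  rw [step1]
  have hsplit1 : ∑ i, ∑ j ∈ univ.erase i,
      (Dex p a b i j + ∑ m ∈ (univ.erase i).erase j,
        (G1ex p a b i j m + G2ex p a b i j m))
      = (∑ i, ∑ j ∈ univ.erase i, Dex p a b i j)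
        + ((∑ i, ∑ j ∈ univ.erase i, ∑ m ∈ (univ.erase i).erase j, G1ex p a b i j m)
          + ∑ i, ∑ j ∈ univ.erase i, ∑ m ∈ (univ.erase i).erase j, G2ex p a b i j m) := by
    simp only [Finset.sum_add_distrib]
  have hsplit2 : ∑ i, ∑ j ∈ univ.erase i,
      ((1 / 2) * ((a i j + a j i) ^ 2 / (p i * p j)
          + (b i j + b j i) ^ 2 / ((1 - p i) * (1 - p j))
          - ((a i j - b i j) + (a j i - b j i)) ^ 2)
        + ∑ m ∈ (univ.erase i).erase j,
          ((a i j + a j i) * (a i m + a m i) / p i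
            + (b i j + b j i) * (b i m + b m i) / (1 - p i)
            - ((a i j - b i j) + (a j i - b j i)) * ((a i m - b i m) + (a m i - b m i))))
      = (∑ i, ∑ j ∈ univ.erase i, (1 / 2) * ((a i j + a j i) ^ 2 / (p i * p j)
          + (b i j + b j i) ^ 2 / ((1 - p i) * (1 - p j))
          - ((a i j - b i j) + (a j i - b j i)) ^ 2))
        + ∑ i, ∑ j ∈ univ.erase i, ∑ m ∈ (univ.erase i).erase j,
          ((a i j + a j i) * (a i m + a m i) / p i
            + (b i j + b j i) * (b i m + b m i) / (1 - p i)
            - ((a i j - b i j) + (a j i - b j i)) * ((a i m - b i m) + (a m i - b m i))) := by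
    simp only [Finset.sum_add_distrib]
  rw [hsplit1, hsplit2]
  have hD : ∑ i, ∑ j ∈ univ.erase i, (1 / 2) * ((a i j + a j i) ^ 2 / (p i * p j)
        + (b i j + b j i) ^ 2 / ((1 - p i) * (1 - p j))
        - ((a i j - b i j) + (a j i - b j i)) ^ 2)
      = ((∑ i, ∑ j ∈ univ.erase i, Dex p a b i j)
        + ∑ i, ∑ j ∈ univ.erase i, Dex p a b j i) / 2 := by
    rw [← Finset.sum_add_distrib]
    rw [Finset.sum_div]
    refine Finset.sum_congr rfl fun i _ => ?_
    rw [← Finset.sum_add_distrib, Finset.sum_div]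
    refine Finset.sum_congr rfl fun j _ => ?_
    simp only [Dex]
    ring
  have hG : ∑ i, ∑ j ∈ univ.erase i, ∑ m ∈ (univ.erase i).erase j,
        ((a i j + a j i) * (a i m + a m i) / p i
          + (b i j + b j i) * (b i m + b m i) / (1 - p i)
          - ((a i j - b i j) + (a j i - b j i)) * ((a i m - b i m) + (a m i - b m i)))
      = (∑ i, ∑ j ∈ univ.erase i, ∑ m ∈ (univ.erase i).erase j, G1ex p a b i j m)
        + ∑ i, ∑ j ∈ univ.erase i, ∑ m ∈ (univ.erase i).erase j, G2ex p a b j i m := by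
    simp only [← Finset.sum_add_distrib]
    refine Finset.sum_congr rfl fun i _ => Finset.sum_congr rfl fun j _ =>
      Finset.sum_congr rfl fun m _ => ?_
    simp only [G1ex, G2ex]
    ring
  have he1 := sum_pairs_swap (fun i j => Dex p a b i j)
  have he2 := sum_triples_swap (fun i j m => G2ex p a b i j m)
  rw [hD, hG]
  linarith [he1, he2]


lemma expec_smul (w : (Fin n → Bool) → ℝ) (c : ℝ) (f : (Fin n → Bool) → ℝ) :
    expec w (fun z => c * f z) = c * expec w f := by
  rw [expec, expec, Finset.mul_sum]
  exact Finset.sum_congr rfl fun z _ => by ring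

lemma varc_smul_eq (p : Fin n → ℝ) (c : ℝ) (S : (Fin n → Bool) → ℝ) :
    varc (bernWeight p) (fun z => c * S z)
      = c ^ 2 * (expec (bernWeight p) (fun z => S z * S z)
          - expec (bernWeight p) S * expec (bernWeight p) S) := by
  set w := bernWeight p with hw
  have h1 : expec w (fun z => c * S z) = c * expec w S := expec_smul w c S
  show expec w (fun z => (c * S z - expec w (fun z => c * S z)) ^ 2) = _
  rw [h1]
  have h2 : (fun z => (c * S z - c * expec w S) ^ 2)
      = fun z => c ^ 2 * ((fun z => S z * S z) z)
          + (-(2 * c ^ 2 * expec w S)) * S z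
          + (c ^ 2 * expec w S * expec w S) * ((fun _ => (1 : ℝ)) z) :=
    funext fun z => by ring
  rw [h2, expec_lin3, hw, expec_one]
  ring

lemma sum_pairs_mul (F G : Fin n → Fin n → ℝ) :
    (∑ i, ∑ j ∈ univ.erase i, F i j) * (∑ k, ∑ l ∈ univ.erase k, G k l)
      = ∑ i, ∑ j ∈ univ.erase i, ∑ k, ∑ l ∈ univ.erase k, F i j * G k l := by
  rw [Finset.sum_mul]
  refine Finset.sum_congr rfl fun i _ => ?_
  rw [Finset.sum_mul]
  refine Finset.sum_congr rfl fun j _ => ?_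
  rw [Finset.mul_sum]
  refine Finset.sum_congr rfl fun k _ => ?_
  rw [Finset.mul_sum]

lemma expec_sum4 (w : (Fin n → Bool) → ℝ)
    (H : Fin n → Fin n → Fin n → Fin n → (Fin n → Bool) → ℝ) :
    expec w (fun z => ∑ i, ∑ j ∈ univ.erase i, ∑ k, ∑ l ∈ univ.erase k, H i j k l z)
      = ∑ i, ∑ j ∈ univ.erase i, ∑ k, ∑ l ∈ univ.erase k, expec w (H i j k l) := by
  rw [expec_sum]
  refine Finset.sum_congr rfl fun i _ => ?_
  rw [expec_sum]
  refine Finset.sum_congr rfl fun j _ => ?_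
  rw [expec_sum]
  refine Finset.sum_congr rfl fun k _ => ?_
  rw [expec_sum]


end S4

open S4

/-- under Bernoulli randomization and dyadic interference, the variance of
the Horvitz–Thompson estimator equals the explicit dyad/triad expression. -/

theorem statement4 (n : ℕ) (hn : 2 ≤ n) (p : Fin n → ℝ)
    (hp : ∀ i, p i ∈ Set.Ioo (0 : ℝ) 1)
    (Y : Fin n → Fin n → Bool → Bool → ℝ) :
    varc (bernWeight p) (tauHT p Y) =
      ((n : ℝ) ^ 2)⁻¹ * ∑ i, ∑ j ∈ univ.erase i,
        ((1 / 2) * ((Spot Y i j true true) ^ 2 / (p i * p j)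
            + (Spot Y i j false false) ^ 2 / ((1 - p i) * (1 - p j))
            - (tij Y i j + tij Y j i) ^ 2)
          + ∑ k ∈ (univ.erase i).erase j,
            (Spot Y i j true true * Spot Y i k true true / p i
              + Spot Y i j false false * Spot Y i k false false / (1 - p i)
              - (tij Y i j + tij Y j i) * (tij Y i k + tij Y k i))) := by
  classical
  set a : Fin n → Fin n → ℝ := fun i j => Y i j true true with ha
  set b : Fin n → Fin n → ℝ := fun i j => Y i j false false with hb
  set w := bernWeight p with hw
  set S : (Fin n → Bool) → ℝ :=
    fun z => ∑ i, ∑ j ∈ univ.erase i, Tcan p i j (a i j) (b i j) z with hS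
  have hT : tauHT p Y = fun z => (n : ℝ)⁻¹ * S z := by
    funext z
    rw [tauHT, hS]
    congr 1
    refine Finset.sum_congr rfl fun i _ => Finset.sum_congr rfl fun j _ => ?_
    rw [ha, hb]
    simp only [Tcan]
    cases hzi : z i <;> cases hzj : z j <;>
      simp only [indR_true, indR_false] <;> ring
  rw [hT, varc_smul_eq]
  have hESS : expec w (fun z => S z * S z)
      = ∑ i, ∑ j ∈ univ.erase i, ∑ k, ∑ l ∈ univ.erase k,
          expec w (fun z => Tcan p i j (a i j) (b i j) z * Tcan p k l (a k l) (b k l) z) := by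
    have hpt : (fun z => S z * S z)
        = fun z => ∑ i, ∑ j ∈ univ.erase i, ∑ k, ∑ l ∈ univ.erase k,
            Tcan p i j (a i j) (b i j) z * Tcan p k l (a k l) (b k l) z :=
      funext fun z => by rw [hS]; exact sum_pairs_mul _ _
    rw [hpt, hw]
    exact expec_sum4 _ _
  have hES : expec w S = ∑ i, ∑ j ∈ univ.erase i, (a i j - b i j) := by
    rw [hS, hw]
    rw [expec_sum]
    refine Finset.sum_congr rfl fun i _ => ?_
    rw [expec_sum]
    refine Finset.sum_congr rfl fun j hj => ?_
    exact E_T p hp (Finset.mem_erase.mp hj).1.symm _ _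
  have hES2 : expec w S * expec w S
      = ∑ i, ∑ j ∈ univ.erase i, ∑ k, ∑ l ∈ univ.erase k,
          (a i j - b i j) * (a k l - b k l) := by
    rw [hES]
    exact sum_pairs_mul _ _
  rw [hESS, hES2, hw]
  have hdiff : (∑ i, ∑ j ∈ univ.erase i, ∑ k, ∑ l ∈ univ.erase k,
        expec (bernWeight p)
          (fun z => Tcan p i j (a i j) (b i j) z * Tcan p k l (a k l) (b k l) z))
      - (∑ i, ∑ j ∈ univ.erase i, ∑ k, ∑ l ∈ univ.erase k,
          (a i j - b i j) * (a k l - b k l))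
      = ∑ i, ∑ j ∈ univ.erase i, ∑ k, ∑ l ∈ univ.erase k,
          (expec (bernWeight p)
            (fun z => Tcan p i j (a i j) (b i j) z * Tcan p k l (a k l) (b k l) z)
          - (a i j - b i j) * (a k l - b k l)) := by
    simp only [← Finset.sum_sub_distrib]
  rw [hdiff, cov_sum p hp a b]
  have hfinal : ∑ i, ∑ j ∈ univ.erase i,
      ((1 / 2) * ((a i j + a j i) ^ 2 / (p i * p j)
          + (b i j + b j i) ^ 2 / ((1 - p i) * (1 - p j))
          - ((a i j - b i j) + (a j i - b j i)) ^ 2)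
        + ∑ m ∈ (univ.erase i).erase j,
          ((a i j + a j i) * (a i m + a m i) / p i
            + (b i j + b j i) * (b i m + b m i) / (1 - p i)
            - ((a i j - b i j) + (a j i - b j i)) * ((a i m - b i m) + (a m i - b m i))))
      = ∑ i, ∑ j ∈ univ.erase i,
        ((1 / 2) * ((Spot Y i j true true) ^ 2 / (p i * p j)
            + (Spot Y i j false false) ^ 2 / ((1 - p i) * (1 - p j))
            - (tij Y i j + tij Y j i) ^ 2)
          + ∑ k ∈ (univ.erase i).erase j,
            (Spot Y i j true true * Spot Y i k true true / p i
              + Spot Y i j false false * Spot Y i k false false / (1 - p i)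
              - (tij Y i j + tij Y j i) * (tij Y i k + tij Y k i))) := by
    refine Finset.sum_congr rfl fun i _ => Finset.sum_congr rfl fun j _ => ?_
    rw [ha, hb]
    simp only [Spot, tij]
  rw [hfinal]
  rw [← inv_pow]
end
end

section
/- Let τ̂_ij = Z_ijY_ij/p_ij − Z̄_ijY_ij/q_ij and τ_ij = Y_ij(1,1) − Y_ij(0,0). For any randomization design with p_ij, q_ij, p_kl, q_kl > 0, under dyadic interference, if the ordered pairs (i,j) and (k,l) share at least one unit (i.e. {i,j} ∩ {k,l} ≠ ∅), then cov(τ̂_ij, τ̂_kl) = p_ij^{-1}p_kl^{-1} E(Z_ijZ_kl) Y_ij(1,1)Y_kl(1,1) + q_ij^{-1}q_kl^{-1} E(Z̄_ijZ̄_kl) Y_ij(0,0)Y_kl(0,0) − τ_ijτ_kl. -/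
open Finset
open scoped Classical

noncomputable section

/-- Marginal treatment probability pr(Z_i = 1) = E(Z_i) under design `w`. -/
def margOf {m : ℕ} (w : (Fin m → Bool) → ℝ) (i : Fin m) : ℝ :=
  expec w (fun z => indR (z i))

/-- Joint treatment probability p_ij = E(Z_iZ_j) under design `w`. -/
def pijOf {m : ℕ} (w : (Fin m → Bool) → ℝ) (i j : Fin m) : ℝ :=
  expec w (fun z => indR (z i) * indR (z j))

/-- Joint control probability q_ij = E{(1−Z_i)(1−Z_j)} under design `w`. -/
def qijOf {m : ℕ} (w : (Fin m → Bool) → ℝ) (i j : Fin m) : ℝ :=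
  expec w (fun z => (1 - indR (z i)) * (1 - indR (z j)))

/-- P₁ = min_i pr(Z_i=1) and P₀ = min_i pr(Z_i=0) under design `w`. -/
def PzW {m : ℕ} (w : (Fin m → Bool) → ℝ) : Bool → ℝ
  | true => sInf (Set.range (margOf w))
  | false => sInf (Set.range fun i => 1 - margOf w i)

/-- `w` is a Bernoulli randomization design. -/
def IsBern {m : ℕ} (w : (Fin m → Bool) → ℝ) : Prop :=
  ∃ p : Fin m → ℝ, (∀ i, p i ∈ Set.Ioo (0 : ℝ) 1) ∧ w = bernWeight p

/-- `w` is a complete randomization design with 2 ≤ n₁ ≤ n − 2. -/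
def IsCR {m : ℕ} (w : (Fin m → Bool) → ℝ) : Prop :=
  ∃ n1 : ℕ, 2 ≤ n1 ∧ n1 + 2 ≤ m ∧ w = crWeight m n1

/-- The Horvitz–Thompson estimator under a general design `w`. -/
def tauHTW {n : ℕ} (w : (Fin n → Bool) → ℝ) (Y : Fin n → Fin n → Bool → Bool → ℝ)
    (z : Fin n → Bool) : ℝ :=
  (n : ℝ)⁻¹ * ∑ i, ∑ j ∈ univ.erase i,
    (indR (z i) * indR (z j) / pijOf w i j
      - (1 - indR (z i)) * (1 - indR (z j)) / qijOf w i j)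
      * Y i j (z i) (z j)

/-- The Hájek estimator under a general design `w`. -/
def tauHAW {n : ℕ} (w : (Fin n → Bool) → ℝ) (Y : Fin n → Fin n → Bool → Bool → ℝ)
    (z : Fin n → Bool) : ℝ :=
  (∑ i, indR (z i) / margOf w i)⁻¹ *
      ∑ i, ∑ j ∈ univ.erase i,
        indR (z i) * indR (z j) * Y i j (z i) (z j) / pijOf w i j
    - (∑ i, (1 - indR (z i)) / (1 - margOf w i))⁻¹ *
      ∑ i, ∑ j ∈ univ.erase i,
        (1 - indR (z i)) * (1 - indR (z j)) * Y i j (z i) (z j) / qijOf w i j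

/-- The dyad-level Horvitz–Thompson term τ̂_ij = Z_ijY_ij/p_ij − Z̄_ijY_ij/q_ij. -/
def tauHatPair {n : ℕ} (w : (Fin n → Bool) → ℝ) (Y : Fin n → Fin n → Bool → Bool → ℝ)
    (i j : Fin n) (z : Fin n → Bool) : ℝ :=
  indR (z i) * indR (z j) * Y i j (z i) (z j) / pijOf w i j
    - (1 - indR (z i)) * (1 - indR (z j)) * Y i j (z i) (z j) / qijOf w i j

lemma expec_smul' {m : ℕ} (w : (Fin m → Bool) → ℝ) (C : ℝ) (X : (Fin m → Bool) → ℝ) :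
    ∑ z : Fin m → Bool, w z * (C * X z) = C * ∑ z : Fin m → Bool, w z * X z := by
  rw [Finset.mul_sum]; exact Finset.sum_congr rfl fun z _ => by ring

lemma expec_sub' {m : ℕ} (w F G : (Fin m → Bool) → ℝ) :
    ∑ z : Fin m → Bool, w z * (F z - G z)
      = (∑ z : Fin m → Bool, w z * F z) - ∑ z : Fin m → Bool, w z * G z := by
  rw [← Finset.sum_sub_distrib]; exact Finset.sum_congr rfl fun z _ => mul_sub _ _ _

lemma expec_add' {m : ℕ} (w F G : (Fin m → Bool) → ℝ) :
    ∑ z : Fin m → Bool, w z * (F z + G z)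
      = (∑ z : Fin m → Bool, w z * F z) + ∑ z : Fin m → Bool, w z * G z := by
  rw [← Finset.sum_add_distrib]; exact Finset.sum_congr rfl fun z _ => mul_add _ _ _

lemma covar_eq' {m : ℕ} (w : (Fin m → Bool) → ℝ) (hw1 : ∑ z : Fin m → Bool, w z = 1)
    (f g : (Fin m → Bool) → ℝ) :
    covar w f g = expec w (fun z => f z * g z) - expec w f * expec w g := by
  simp only [covar, expec]
  set A := ∑ z : Fin m → Bool, w z * f z with hA
  set B := ∑ z : Fin m → Bool, w z * g z with hB
  have h : ∀ z : Fin m → Bool, w z * ((f z - A) * (g z - B)) =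
      w z * (f z * g z) - w z * (A * g z) - w z * (B * f z) + (A * B) * w z := by
    intro z; ring
  simp only [h]
  rw [Finset.sum_add_distrib, Finset.sum_sub_distrib, Finset.sum_sub_distrib,
    expec_smul' w A g, expec_smul' w B f, ← Finset.mul_sum, hw1, ← hA, ← hB]
  ring

/-- for any randomization design with positive joint probabilities,
if the ordered pairs (i,j) and (k,l) share at least one unit, then
cov(τ̂_ij, τ̂_kl) = p_ij⁻¹p_kl⁻¹ E(Z_ijZ_kl) Y_ij(1,1)Y_kl(1,1)
 + q_ij⁻¹q_kl⁻¹ E(Z̄_ijZ̄_kl) Y_ij(0,0)Y_kl(0,0) − τ_ijτ_kl. -/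
theorem statement11 (n : ℕ) (hn : 2 ≤ n)
    (w : (Fin n → Bool) → ℝ)
    (hw : ∀ z, 0 ≤ w z) (hw1 : ∑ z : Fin n → Bool, w z = 1)
    (Y : Fin n → Fin n → Bool → Bool → ℝ)
    (i j k l : Fin n) (hij : i ≠ j) (hkl : k ≠ l)
    (hshare : i = k ∨ i = l ∨ j = k ∨ j = l)
    (hpij : 0 < pijOf w i j) (hqij : 0 < qijOf w i j)
    (hpkl : 0 < pijOf w k l) (hqkl : 0 < qijOf w k l) :
    covar w (tauHatPair w Y i j) (tauHatPair w Y k l) =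
      (pijOf w i j)⁻¹ * (pijOf w k l)⁻¹
          * expec w (fun z => indR (z i) * indR (z j) * (indR (z k) * indR (z l)))
          * (Y i j true true * Y k l true true)
        + (qijOf w i j)⁻¹ * (qijOf w k l)⁻¹
          * expec w (fun z =>
              (1 - indR (z i)) * (1 - indR (z j)) * ((1 - indR (z k)) * (1 - indR (z l))))
          * (Y i j false false * Y k l false false)
        - (Y i j true true - Y i j false false) * (Y k l true true - Y k l false false) := by
  have hA : ∀ (a b : Fin n) (z : Fin n → Bool),
      indR (z a) * indR (z b) * Y a b (z a) (z b)
        = indR (z a) * indR (z b) * Y a b true true := by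
    intro a b z; cases z a <;> cases z b <;> simp [indR]
  have hB : ∀ (a b : Fin n) (z : Fin n → Bool),
      (1 - indR (z a)) * (1 - indR (z b)) * Y a b (z a) (z b)
        = (1 - indR (z a)) * (1 - indR (z b)) * Y a b false false := by
    intro a b z; cases z a <;> cases z b <;> simp [indR]
  have hcross1 : ∀ z : Fin n → Bool,
      indR (z i) * indR (z j) * ((1 - indR (z k)) * (1 - indR (z l))) = 0 := by
    intro z
    rcases hshare with h | h | h | h <;> rw [h] <;>
      (try cases z k) <;> (try cases z l) <;> simp [indR]
  have hcross2 : ∀ z : Fin n → Bool,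
      (1 - indR (z i)) * (1 - indR (z j)) * (indR (z k) * indR (z l)) = 0 := by
    intro z
    rcases hshare with h | h | h | h <;> rw [h] <;>
      (try cases z k) <;> (try cases z l) <;> simp [indR]
  have hf : ∀ (a b : Fin n) (z : Fin n → Bool), tauHatPair w Y a b z =
      (pijOf w a b)⁻¹ * Y a b true true * (indR (z a) * indR (z b))
        - (qijOf w a b)⁻¹ * Y a b false false * ((1 - indR (z a)) * (1 - indR (z b))) := by
    intro a b z
    simp only [tauHatPair]
    rw [hA a b z, hB a b z]
    ring
  have Ef : ∀ a b : Fin n, pijOf w a b ≠ 0 → qijOf w a b ≠ 0 →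
      expec w (tauHatPair w Y a b) = Y a b true true - Y a b false false := by
    intro a b hp hq
    have h1 : expec w (tauHatPair w Y a b)
        = ((pijOf w a b)⁻¹ * Y a b true true) * pijOf w a b
          - ((qijOf w a b)⁻¹ * Y a b false false) * qijOf w a b := by
      simp only [expec]
      simp only [hf]
      rw [expec_sub' w, expec_smul' w ((pijOf w a b)⁻¹ * Y a b true true),
        expec_smul' w ((qijOf w a b)⁻¹ * Y a b false false)]
      rfl
    rw [h1]
    field_simp
  have key : ∀ z : Fin n → Bool, tauHatPair w Y i j z * tauHatPair w Y k l z =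
      ((pijOf w i j)⁻¹ * (pijOf w k l)⁻¹ * (Y i j true true * Y k l true true))
        * (indR (z i) * indR (z j) * (indR (z k) * indR (z l)))
      + ((qijOf w i j)⁻¹ * (qijOf w k l)⁻¹ * (Y i j false false * Y k l false false))
        * ((1 - indR (z i)) * (1 - indR (z j)) * ((1 - indR (z k)) * (1 - indR (z l)))) := by
    intro z
    rw [hf i j z, hf k l z]
    linear_combination
      (-(((pijOf w i j)⁻¹ * Y i j true true) * ((qijOf w k l)⁻¹ * Y k l false false)))
        * hcross1 z
      + (-(((qijOf w i j)⁻¹ * Y i j false false) * ((pijOf w k l)⁻¹ * Y k l true true)))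
        * hcross2 z
  have Efg : expec w (fun z => tauHatPair w Y i j z * tauHatPair w Y k l z)
      = ((pijOf w i j)⁻¹ * (pijOf w k l)⁻¹ * (Y i j true true * Y k l true true))
          * expec w (fun z => indR (z i) * indR (z j) * (indR (z k) * indR (z l)))
        + ((qijOf w i j)⁻¹ * (qijOf w k l)⁻¹ * (Y i j false false * Y k l false false))
          * expec w (fun z =>
              (1 - indR (z i)) * (1 - indR (z j)) * ((1 - indR (z k)) * (1 - indR (z l)))) := by
    simp only [expec]
    simp only [key]
    rw [expec_add' w,
      expec_smul' w ((pijOf w i j)⁻¹ * (pijOf w k l)⁻¹ * (Y i j true true * Y k l true true)),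
      expec_smul' w ((qijOf w i j)⁻¹ * (qijOf w k l)⁻¹ * (Y i j false false * Y k l false false))]
  rw [covar_eq' w hw1, Efg, Ef i j hpij.ne' hqij.ne', Ef k l hpkl.ne' hqkl.ne']
  ring
end
end

section
/- Under Bernoulli randomization and dyadic interference, the variance estimator V̂ satisfies the exact identity E(V̂) = var(τ̂_HT) + bias(V̂), where bias(V̂) = n^{-2} Σ_i Σ_{j≠i} { (1/2)(τ_ij + τ_ji)² + Σ_{k∉{i,j}} (τ_ij + τ_ji)(τ_ik + τ_ki) } and τ_ij = Y_ij(1,1) − Y_ij(0,0). -/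
open Finset
open scoped Classical

noncomputable section

/-- The observed symmetrized dyadic outcome S_ij = Y_ij + Y_ji. -/
def Sobs {n : ℕ} (Y : Fin n → Fin n → Bool → Bool → ℝ) (z : Fin n → Bool)
    (i j : Fin n) : ℝ :=
  Y i j (z i) (z j) + Y j i (z j) (z i)

/-- The variance estimator V̂. -/
def Vhat {n : ℕ} (p : Fin n → ℝ) (Y : Fin n → Fin n → Bool → Bool → ℝ)
    (z : Fin n → Bool) : ℝ :=
  ((n : ℝ) ^ 2)⁻¹ * ∑ i, ∑ j ∈ univ.erase i,
    ((1 / 2) * (indR (z i) * indR (z j) / (p i * p j) ^ 2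
        + (1 - indR (z i)) * (1 - indR (z j)) / ((1 - p i) * (1 - p j)) ^ 2)
        * Sobs Y z i j ^ 2
      + ∑ k ∈ (univ.erase i).erase j,
        (indR (z i) * indR (z j) * indR (z k) / ((p i * p j) * (p i * p k))
          + (1 - indR (z i)) * (1 - indR (z j)) * (1 - indR (z k))
            / (((1 - p i) * (1 - p j)) * ((1 - p i) * (1 - p k))))
          * (Sobs Y z i j * Sobs Y z i k))

/-- The bias term bias(V̂). -/
def biasV {n : ℕ} (Y : Fin n → Fin n → Bool → Bool → ℝ) : ℝ :=
  ((n : ℝ) ^ 2)⁻¹ * ∑ i, ∑ j ∈ univ.erase i,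
    ((1 / 2) * (tij Y i j + tij Y j i) ^ 2
      + ∑ k ∈ (univ.erase i).erase j,
        (tij Y i j + tij Y j i) * (tij Y i k + tij Y k i))

namespace S12
variable {n : ℕ}

def bw (p : Fin n → ℝ) (i : Fin n) (b : Bool) : ℝ := if b then p i else 1 - p i

def eB (b x : Bool) : ℝ := if x = b then 1 else 0

lemma bernWeight_eq (p : Fin n → ℝ) (z : Fin n → Bool) :
    bernWeight p z = ∏ i, bw p i (z i) := rfl

lemma sum_prod_bool (h : Fin n → Bool → ℝ) :
    ∑ z : Fin n → Bool, ∏ i, h i (z i) = ∏ i, (h i true + h i false) := by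
  rw [← Fintype.prod_sum (fun i (b : Bool) => h i b)]
  exact Finset.prod_congr rfl fun i _ => by rw [Fintype.sum_bool]

lemma expec_sum {α : Type*} (s : Finset α) (w : (Fin n → Bool) → ℝ)
    (F : α → (Fin n → Bool) → ℝ) :
    expec w (fun z => ∑ x ∈ s, F x z) = ∑ x ∈ s, expec w (F x) := by
  unfold expec
  simp only [Finset.mul_sum]
  exact Finset.sum_comm

lemma expec_const_mul (w : (Fin n → Bool) → ℝ) (c : ℝ) (f : (Fin n → Bool) → ℝ) :
    expec w (fun z => c * f z) = c * expec w f := by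
  unfold expec
  rw [Finset.mul_sum]
  exact Finset.sum_congr rfl fun z _ => by ring

lemma expec_add (w : (Fin n → Bool) → ℝ) (f g : (Fin n → Bool) → ℝ) :
    expec w (fun z => f z + g z) = expec w f + expec w g := by
  unfold expec
  rw [← Finset.sum_add_distrib]
  exact Finset.sum_congr rfl fun z _ => by ring

lemma expec_eB (p : Fin n → ℝ) (s : Finset (Fin n)) (σ : Fin n → Bool) :
    expec (bernWeight p) (fun z => ∏ m ∈ s, eB (σ m) (z m)) = ∏ m ∈ s, bw p m (σ m) := by
  unfold expec
  have h1 : ∀ z : Fin n → Bool, bernWeight p z * ∏ m ∈ s, eB (σ m) (z m)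
      = ∏ m, (bw p m (z m) * if m ∈ s then eB (σ m) (z m) else 1) := by
    intro z
    rw [Finset.prod_mul_distrib, ← bernWeight_eq]
    congr 1
    rw [Finset.prod_ite_mem, univ_inter]
  simp only [h1]
  rw [sum_prod_bool (fun m x => bw p m x * if m ∈ s then eB (σ m) x else 1)]
  have h2 : ∀ m, (bw p m true * (if m ∈ s then eB (σ m) true else 1)
      + bw p m false * (if m ∈ s then eB (σ m) false else 1))
      = if m ∈ s then bw p m (σ m) else 1 := by
    intro m
    by_cases hm : m ∈ s
    · cases hσ : σ m <;> simp [hm, bw, eB, hσ]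
    · simp [hm, bw]
  simp only [h2]
  rw [Finset.prod_ite_mem, univ_inter]

lemma bern_sum_one (p : Fin n → ℝ) : ∑ z : Fin n → Bool, bernWeight p z = 1 := by
  simp only [bernWeight_eq]
  rw [sum_prod_bool]
  exact Finset.prod_eq_one fun i _ => by simp [bw]


lemma expec_two (p : Fin n → ℝ) {i j : Fin n} (hij : i ≠ j) (f : Bool → Bool → ℝ) :
    expec (bernWeight p) (fun z => f (z i) (z j))
      = ∑ a : Bool, ∑ b : Bool, bw p i a * bw p j b * f a b := by
  have hprod : ∀ (a b : Bool) (z : Fin n → Bool),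
      (∏ m ∈ ({i, j} : Finset (Fin n)), eB ((fun m => if m = i then a else b) m) (z m))
        = eB a (z i) * eB b (z j) := by
    intro a b z
    rw [Finset.prod_pair hij]
    simp [hij.symm]
  have key : (fun z : Fin n → Bool => f (z i) (z j))
      = fun z => ∑ a : Bool, ∑ b : Bool, f a b *
          ∏ m ∈ ({i, j} : Finset (Fin n)), eB ((fun m => if m = i then a else b) m) (z m) := by
    funext z
    simp only [hprod]
    cases hzi : z i <;> cases hzj : z j <;> simp [eB]
  rw [key, expec_sum]
  refine Finset.sum_congr rfl fun a _ => ?_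
  rw [expec_sum]
  refine Finset.sum_congr rfl fun b _ => ?_
  rw [expec_const_mul, expec_eB]
  rw [Finset.prod_pair hij]
  simp [hij.symm]
  ring

lemma expec_three (p : Fin n → ℝ) {i j k : Fin n} (hij : i ≠ j) (hik : i ≠ k) (hjk : j ≠ k)
    (f : Bool → Bool → Bool → ℝ) :
    expec (bernWeight p) (fun z => f (z i) (z j) (z k))
      = ∑ a : Bool, ∑ b : Bool, ∑ c : Bool,
          bw p i a * bw p j b * bw p k c * f a b c := by
  have hset : ∀ (g : Fin n → ℝ), (∏ m ∈ ({i, j, k} : Finset (Fin n)), g m) = g i * g j * g k := by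
    intro g
    rw [show ({i, j, k} : Finset (Fin n)) = insert i (insert j {k}) from rfl]
    rw [Finset.prod_insert (by simp [hij, hik]), Finset.prod_insert (by simp [hjk]),
      Finset.prod_singleton, mul_assoc]
  have hprod : ∀ (a b c : Bool) (z : Fin n → Bool),
      (∏ m ∈ ({i, j, k} : Finset (Fin n)),
          eB ((fun m => if m = i then a else if m = j then b else c) m) (z m))
        = eB a (z i) * (eB b (z j) * eB c (z k)) := by
    intro a b c z
    rw [hset]
    simp [hij.symm, hik.symm, hjk.symm, mul_assoc]
  have key : (fun z : Fin n → Bool => f (z i) (z j) (z k))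
      = fun z => ∑ a : Bool, ∑ b : Bool, ∑ c : Bool, f a b c *
          ∏ m ∈ ({i, j, k} : Finset (Fin n)),
            eB ((fun m => if m = i then a else if m = j then b else c) m) (z m) := by
    funext z
    simp only [hprod]
    cases hzi : z i <;> cases hzj : z j <;> cases hzk : z k <;> simp [eB]
  rw [key, expec_sum]
  refine Finset.sum_congr rfl fun a _ => ?_
  rw [expec_sum]
  refine Finset.sum_congr rfl fun b _ => ?_
  rw [expec_sum]
  refine Finset.sum_congr rfl fun c _ => ?_
  rw [expec_const_mul, expec_eB, hset]
  simp [hij.symm, hik.symm, hjk.symm]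
  ring

lemma expec_four (p : Fin n → ℝ) {i j k l : Fin n} (hij : i ≠ j) (hik : i ≠ k) (hil : i ≠ l)
    (hjk : j ≠ k) (hjl : j ≠ l) (hkl : k ≠ l)
    (f : Bool → Bool → Bool → Bool → ℝ) :
    expec (bernWeight p) (fun z => f (z i) (z j) (z k) (z l))
      = ∑ a : Bool, ∑ b : Bool, ∑ c : Bool, ∑ d : Bool,
          bw p i a * bw p j b * bw p k c * bw p l d * f a b c d := by
  have hset : ∀ (g : Fin n → ℝ),
      (∏ m ∈ ({i, j, k, l} : Finset (Fin n)), g m) = g i * g j * g k * g l := by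
    intro g
    rw [show ({i, j, k, l} : Finset (Fin n)) = insert i (insert j (insert k {l})) from rfl]
    rw [Finset.prod_insert (by simp [hij, hik, hil]), Finset.prod_insert (by simp [hjk, hjl]),
      Finset.prod_insert (by simp [hkl]), Finset.prod_singleton]
    ring
  have hprod : ∀ (a b c d : Bool) (z : Fin n → Bool),
      (∏ m ∈ ({i, j, k, l} : Finset (Fin n)),
          eB ((fun m => if m = i then a else if m = j then b else if m = k then c else d) m) (z m))
        = eB a (z i) * (eB b (z j) * (eB c (z k) * eB d (z l))) := by
    intro a b c d z
    rw [hset]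
    simp [hij.symm, hik.symm, hil.symm, hjk.symm, hjl.symm, hkl.symm]
    ring
  have key : (fun z : Fin n → Bool => f (z i) (z j) (z k) (z l))
      = fun z => ∑ a : Bool, ∑ b : Bool, ∑ c : Bool, ∑ d : Bool, f a b c d *
          ∏ m ∈ ({i, j, k, l} : Finset (Fin n)),
            eB ((fun m => if m = i then a else if m = j then b else if m = k then c else d) m)
              (z m) := by
    funext z
    simp only [hprod]
    cases hzi : z i <;> cases hzj : z j <;> cases hzk : z k <;> cases hzl : z l <;> simp [eB]
  rw [key, expec_sum]
  refine Finset.sum_congr rfl fun a _ => ?_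
  rw [expec_sum]
  refine Finset.sum_congr rfl fun b _ => ?_
  rw [expec_sum]
  refine Finset.sum_congr rfl fun c _ => ?_
  rw [expec_sum]
  refine Finset.sum_congr rfl fun d _ => ?_
  rw [expec_const_mul, expec_eB, hset]
  simp [hij.symm, hik.symm, hil.symm, hjk.symm, hjl.symm, hkl.symm]
  ring


lemma erase_as_filter (i : Fin n) : univ.erase i = univ.filter (fun j => j ≠ i) := by
  ext x; simp [Finset.mem_erase]

lemma sum_pair_swap (F : Fin n → Fin n → ℝ) :
    ∑ i, ∑ j ∈ univ.erase i, F i j = ∑ i, ∑ j ∈ univ.erase i, F j i := by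
  have h : ∀ (G : Fin n → Fin n → ℝ), (∑ i, ∑ j ∈ univ.erase i, G i j)
      = ∑ i, ∑ j, if j ≠ i then G i j else 0 := by
    intro G
    refine Finset.sum_congr rfl fun i _ => ?_
    rw [erase_as_filter, Finset.sum_filter]
  rw [h F, h (fun i j => F j i)]
  rw [Finset.sum_comm]
  refine Finset.sum_congr rfl fun a _ => Finset.sum_congr rfl fun b _ => ?_
  by_cases hab : a = b
  · simp [hab]
  · have hba : ¬b = a := fun h' => hab h'.symm
    simp [hab, hba]

lemma sum_pair_antisym (F : Fin n → Fin n → ℝ)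
    (h : ∀ i j, i ≠ j → F i j + F j i = 0) :
    ∑ i, ∑ j ∈ univ.erase i, F i j = 0 := by
  have h2 : ∑ i, ∑ j ∈ univ.erase i, (F i j + F j i) = 0 := by
    refine Finset.sum_eq_zero fun i _ => Finset.sum_eq_zero fun j hj => ?_
    exact h i j (Finset.ne_of_mem_erase hj).symm
  have h3 : ∑ i, ∑ j ∈ univ.erase i, (F i j + F j i)
      = (∑ i, ∑ j ∈ univ.erase i, F i j) + ∑ i, ∑ j ∈ univ.erase i, F j i := by
    simp [Finset.sum_add_distrib]
  rw [h3, ← sum_pair_swap F] at h2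
  linarith

lemma sum_triple_swap (F : Fin n → Fin n → Fin n → ℝ) :
    ∑ i, ∑ j ∈ univ.erase i, ∑ k ∈ (univ.erase i).erase j, F i j k
      = ∑ i, ∑ j ∈ univ.erase i, ∑ k ∈ (univ.erase i).erase j, F j i k := by
  rw [sum_pair_swap (fun i j => ∑ k ∈ (univ.erase i).erase j, F i j k)]
  refine Finset.sum_congr rfl fun i _ => Finset.sum_congr rfl fun j _ => ?_
  rw [Finset.erase_right_comm]

lemma sum_triple_antisym (F : Fin n → Fin n → Fin n → ℝ)
    (h : ∀ i j k, i ≠ j → i ≠ k → j ≠ k → F i j k + F j i k = 0) :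
    ∑ i, ∑ j ∈ univ.erase i, ∑ k ∈ (univ.erase i).erase j, F i j k = 0 := by
  have h2 : ∑ i, ∑ j ∈ univ.erase i, ∑ k ∈ (univ.erase i).erase j, (F i j k + F j i k) = 0 := by
    refine Finset.sum_eq_zero fun i _ => Finset.sum_eq_zero fun j hj =>
      Finset.sum_eq_zero fun k hk => ?_
    have hji : j ≠ i := Finset.ne_of_mem_erase hj
    have hkj : k ≠ j := Finset.ne_of_mem_erase hk
    have hki : k ≠ i := Finset.ne_of_mem_erase (Finset.mem_of_mem_erase hk)
    exact h i j k hji.symm hki.symm hkj.symm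
  have h3 : ∑ i, ∑ j ∈ univ.erase i, ∑ k ∈ (univ.erase i).erase j, (F i j k + F j i k)
      = (∑ i, ∑ j ∈ univ.erase i, ∑ k ∈ (univ.erase i).erase j, F i j k)
        + ∑ i, ∑ j ∈ univ.erase i, ∑ k ∈ (univ.erase i).erase j, F j i k := by
    simp [Finset.sum_add_distrib]
  rw [h3, ← sum_triple_swap F] at h2
  linarith

lemma extract (a : Fin n) (s : Finset (Fin n)) (f : Fin n → ℝ) (ha : a ∈ s) :
    ∑ x ∈ s, f x = f a + ∑ x ∈ s.erase a, f x := by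
  rw [← Finset.add_sum_erase s f ha]

lemma quad_decomp (i j : Fin n) (hij : i ≠ j) (c : Fin n → Fin n → ℝ)
    (h0 : ∀ k l, k ≠ l → k ≠ i → k ≠ j → l ≠ i → l ≠ j → c k l = 0) :
    ∑ k, ∑ l ∈ univ.erase k, c k l
      = c i j + c j i + ∑ k ∈ (univ.erase i).erase j, (c i k + c j k + c k i + c k j) := by
  have hRi : ∑ l ∈ univ.erase i, c i l = c i j + ∑ l ∈ (univ.erase i).erase j, c i l :=
    extract j (univ.erase i) _ (by simp [hij.symm])
  have hRj : ∑ l ∈ univ.erase j, c j l = c j i + ∑ l ∈ (univ.erase i).erase j, c j l := by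
    rw [extract i (univ.erase j) _ (by simp [hij]), Finset.erase_right_comm]
  have hRk : ∀ k ∈ (univ.erase i).erase j,
      ∑ l ∈ univ.erase k, c k l = c k i + c k j := by
    intro k hk
    have hkj : k ≠ j := Finset.ne_of_mem_erase hk
    have hki : k ≠ i := Finset.ne_of_mem_erase (Finset.mem_of_mem_erase hk)
    rw [extract i (univ.erase k) _ (by simp [hki.symm]),
      extract j ((univ.erase k).erase i) _ (by simp [hkj.symm, hij.symm])]
    have : ∑ l ∈ ((univ.erase k).erase i).erase j, c k l = 0 := by
      refine Finset.sum_eq_zero fun l hl => ?_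
      have hlj : l ≠ j := Finset.ne_of_mem_erase hl
      have hli : l ≠ i := Finset.ne_of_mem_erase (Finset.mem_of_mem_erase hl)
      have hlk : l ≠ k :=
        Finset.ne_of_mem_erase (Finset.mem_of_mem_erase (Finset.mem_of_mem_erase hl))
      exact h0 k l hlk.symm hki hkj hli hlj
    rw [this]
    ring
  rw [extract i univ _ (mem_univ i), hRi,
    extract j (univ.erase i) _ (by simp [hij.symm]), hRj,
    Finset.sum_congr rfl hRk, Finset.sum_add_distrib]
  have : ∑ k ∈ (univ.erase i).erase j, (c i k + c j k + c k i + c k j)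
      = ((∑ k ∈ (univ.erase i).erase j, c i k) + ∑ k ∈ (univ.erase i).erase j, c j k)
        + ∑ k ∈ (univ.erase i).erase j, (c k i + c k j) := by
    rw [← Finset.sum_add_distrib, ← Finset.sum_add_distrib]
    exact Finset.sum_congr rfl fun k _ => by ring
  rw [this, Finset.sum_add_distrib]
  ring



def AF (p : Fin n → ℝ) (Y : Fin n → Fin n → Bool → Bool → ℝ) (i j : Fin n) (a b : Bool) : ℝ :=
  (indR a * indR b / (p i * p j)
    - (1 - indR a) * (1 - indR b) / ((1 - p i) * (1 - p j))) * Y i j a b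

section Pats

variable (p : Fin n → ℝ) (Y : Fin n → Fin n → Bool → Bool → ℝ)

lemma P1 (hp : ∀ i, p i ∈ Set.Ioo (0 : ℝ) 1) {i j : Fin n} (hij : i ≠ j) :
    expec (bernWeight p) (fun z => AF p Y i j (z i) (z j)) = tij Y i j := by
  have hpi : p i ≠ 0 := (hp i).1.ne'
  have hpj : p j ≠ 0 := (hp j).1.ne'
  have hqi : (1 : ℝ) - p i ≠ 0 := sub_ne_zero_of_ne (hp i).2.ne'
  have hqj : (1 : ℝ) - p j ≠ 0 := sub_ne_zero_of_ne (hp j).2.ne'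
  refine Eq.trans (expec_two p hij (fun a b => AF p Y i j a b)) ?_
  simp only [Fintype.sum_bool, AF, bw, indR, tij]
  norm_num
  field_simp
  ring

lemma P2 (hp : ∀ i, p i ∈ Set.Ioo (0 : ℝ) 1) {i j : Fin n} (hij : i ≠ j) :
    expec (bernWeight p) (fun z => AF p Y i j (z i) (z j) * AF p Y i j (z i) (z j))
      = Y i j true true ^ 2 / (p i * p j)
        + Y i j false false ^ 2 / ((1 - p i) * (1 - p j)) := by
  have hpi : p i ≠ 0 := (hp i).1.ne'
  have hpj : p j ≠ 0 := (hp j).1.ne'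
  have hqi : (1 : ℝ) - p i ≠ 0 := sub_ne_zero_of_ne (hp i).2.ne'
  have hqj : (1 : ℝ) - p j ≠ 0 := sub_ne_zero_of_ne (hp j).2.ne'
  refine Eq.trans (expec_two p hij (fun a b => AF p Y i j a b * AF p Y i j a b)) ?_
  simp only [Fintype.sum_bool, AF, bw, indR]
  norm_num
  field_simp

lemma P3 (hp : ∀ i, p i ∈ Set.Ioo (0 : ℝ) 1) {i j : Fin n} (hij : i ≠ j) :
    expec (bernWeight p) (fun z => AF p Y i j (z i) (z j) * AF p Y j i (z j) (z i))
      = Y i j true true * Y j i true true / (p i * p j)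
        + Y i j false false * Y j i false false / ((1 - p i) * (1 - p j)) := by
  have hpi : p i ≠ 0 := (hp i).1.ne'
  have hpj : p j ≠ 0 := (hp j).1.ne'
  have hqi : (1 : ℝ) - p i ≠ 0 := sub_ne_zero_of_ne (hp i).2.ne'
  have hqj : (1 : ℝ) - p j ≠ 0 := sub_ne_zero_of_ne (hp j).2.ne'
  refine Eq.trans (expec_two p hij (fun a b => AF p Y i j a b * AF p Y j i b a)) ?_
  simp only [Fintype.sum_bool, AF, bw, indR]
  norm_num
  field_simp

lemma PS1 (hp : ∀ i, p i ∈ Set.Ioo (0 : ℝ) 1) {i j k : Fin n}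
    (hij : i ≠ j) (hik : i ≠ k) (hjk : j ≠ k) :
    expec (bernWeight p) (fun z => AF p Y i j (z i) (z j) * AF p Y i k (z i) (z k))
      = Y i j true true * Y i k true true / p i
        + Y i j false false * Y i k false false / (1 - p i) := by
  have hpi : p i ≠ 0 := (hp i).1.ne'
  have hpj : p j ≠ 0 := (hp j).1.ne'
  have hpk : p k ≠ 0 := (hp k).1.ne'
  have hqi : (1 : ℝ) - p i ≠ 0 := sub_ne_zero_of_ne (hp i).2.ne'
  have hqj : (1 : ℝ) - p j ≠ 0 := sub_ne_zero_of_ne (hp j).2.ne'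
  have hqk : (1 : ℝ) - p k ≠ 0 := sub_ne_zero_of_ne (hp k).2.ne'
  refine Eq.trans (expec_three p hij hik hjk (fun a b c => AF p Y i j a b * AF p Y i k a c)) ?_
  simp only [Fintype.sum_bool, AF, bw, indR]
  norm_num
  field_simp

lemma PS2 (hp : ∀ i, p i ∈ Set.Ioo (0 : ℝ) 1) {i j k : Fin n}
    (hij : i ≠ j) (hik : i ≠ k) (hjk : j ≠ k) :
    expec (bernWeight p) (fun z => AF p Y i j (z i) (z j) * AF p Y j k (z j) (z k))
      = Y i j true true * Y j k true true / p j
        + Y i j false false * Y j k false false / (1 - p j) := by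
  have hpi : p i ≠ 0 := (hp i).1.ne'
  have hpj : p j ≠ 0 := (hp j).1.ne'
  have hpk : p k ≠ 0 := (hp k).1.ne'
  have hqi : (1 : ℝ) - p i ≠ 0 := sub_ne_zero_of_ne (hp i).2.ne'
  have hqj : (1 : ℝ) - p j ≠ 0 := sub_ne_zero_of_ne (hp j).2.ne'
  have hqk : (1 : ℝ) - p k ≠ 0 := sub_ne_zero_of_ne (hp k).2.ne'
  refine Eq.trans (expec_three p hij hik hjk (fun a b c => AF p Y i j a b * AF p Y j k b c)) ?_
  simp only [Fintype.sum_bool, AF, bw, indR]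
  norm_num
  field_simp

lemma PS3 (hp : ∀ i, p i ∈ Set.Ioo (0 : ℝ) 1) {i j k : Fin n}
    (hij : i ≠ j) (hik : i ≠ k) (hjk : j ≠ k) :
    expec (bernWeight p) (fun z => AF p Y i j (z i) (z j) * AF p Y k i (z k) (z i))
      = Y i j true true * Y k i true true / p i
        + Y i j false false * Y k i false false / (1 - p i) := by
  have hpi : p i ≠ 0 := (hp i).1.ne'
  have hpj : p j ≠ 0 := (hp j).1.ne'
  have hpk : p k ≠ 0 := (hp k).1.ne'
  have hqi : (1 : ℝ) - p i ≠ 0 := sub_ne_zero_of_ne (hp i).2.ne'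
  have hqj : (1 : ℝ) - p j ≠ 0 := sub_ne_zero_of_ne (hp j).2.ne'
  have hqk : (1 : ℝ) - p k ≠ 0 := sub_ne_zero_of_ne (hp k).2.ne'
  refine Eq.trans (expec_three p hij hik hjk (fun a b c => AF p Y i j a b * AF p Y k i c a)) ?_
  simp only [Fintype.sum_bool, AF, bw, indR]
  norm_num
  field_simp

lemma PS4 (hp : ∀ i, p i ∈ Set.Ioo (0 : ℝ) 1) {i j k : Fin n}
    (hij : i ≠ j) (hik : i ≠ k) (hjk : j ≠ k) :
    expec (bernWeight p) (fun z => AF p Y i j (z i) (z j) * AF p Y k j (z k) (z j))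
      = Y i j true true * Y k j true true / p j
        + Y i j false false * Y k j false false / (1 - p j) := by
  have hpi : p i ≠ 0 := (hp i).1.ne'
  have hpj : p j ≠ 0 := (hp j).1.ne'
  have hpk : p k ≠ 0 := (hp k).1.ne'
  have hqi : (1 : ℝ) - p i ≠ 0 := sub_ne_zero_of_ne (hp i).2.ne'
  have hqj : (1 : ℝ) - p j ≠ 0 := sub_ne_zero_of_ne (hp j).2.ne'
  have hqk : (1 : ℝ) - p k ≠ 0 := sub_ne_zero_of_ne (hp k).2.ne'
  refine Eq.trans (expec_three p hij hik hjk (fun a b c => AF p Y i j a b * AF p Y k j c b)) ?_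
  simp only [Fintype.sum_bool, AF, bw, indR]
  norm_num
  field_simp

lemma P5 (hp : ∀ i, p i ∈ Set.Ioo (0 : ℝ) 1) {i j k l : Fin n}
    (hij : i ≠ j) (hik : i ≠ k) (hil : i ≠ l) (hjk : j ≠ k) (hjl : j ≠ l) (hkl : k ≠ l) :
    expec (bernWeight p) (fun z => AF p Y i j (z i) (z j) * AF p Y k l (z k) (z l))
      = tij Y i j * tij Y k l := by
  have hpi : p i ≠ 0 := (hp i).1.ne'
  have hpj : p j ≠ 0 := (hp j).1.ne'
  have hpk : p k ≠ 0 := (hp k).1.ne'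
  have hpl : p l ≠ 0 := (hp l).1.ne'
  have hqi : (1 : ℝ) - p i ≠ 0 := sub_ne_zero_of_ne (hp i).2.ne'
  have hqj : (1 : ℝ) - p j ≠ 0 := sub_ne_zero_of_ne (hp j).2.ne'
  have hqk : (1 : ℝ) - p k ≠ 0 := sub_ne_zero_of_ne (hp k).2.ne'
  have hql : (1 : ℝ) - p l ≠ 0 := sub_ne_zero_of_ne (hp l).2.ne'
  refine Eq.trans (expec_four p hij hik hil hjk hjl hkl
    (fun a b c d => AF p Y i j a b * AF p Y k l c d)) ?_
  simp only [Fintype.sum_bool, AF, bw, indR, tij]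
  norm_num
  field_simp
  ring

lemma PV1 (hp : ∀ i, p i ∈ Set.Ioo (0 : ℝ) 1) {i j : Fin n} (hij : i ≠ j) :
    expec (bernWeight p) (fun z =>
        (1 / 2) * (indR (z i) * indR (z j) / (p i * p j) ^ 2
          + (1 - indR (z i)) * (1 - indR (z j)) / ((1 - p i) * (1 - p j)) ^ 2)
          * (Y i j (z i) (z j) + Y j i (z j) (z i)) ^ 2)
      = (1 / 2) * ((Y i j true true + Y j i true true) ^ 2 / (p i * p j)
          + (Y i j false false + Y j i false false) ^ 2 / ((1 - p i) * (1 - p j))) := by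
  have hpi : p i ≠ 0 := (hp i).1.ne'
  have hpj : p j ≠ 0 := (hp j).1.ne'
  have hqi : (1 : ℝ) - p i ≠ 0 := sub_ne_zero_of_ne (hp i).2.ne'
  have hqj : (1 : ℝ) - p j ≠ 0 := sub_ne_zero_of_ne (hp j).2.ne'
  refine Eq.trans (expec_two p hij (fun a b =>
    (1 / 2) * (indR a * indR b / (p i * p j) ^ 2
      + (1 - indR a) * (1 - indR b) / ((1 - p i) * (1 - p j)) ^ 2)
      * (Y i j a b + Y j i b a) ^ 2)) ?_
  simp only [Fintype.sum_bool, bw, indR]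
  norm_num
  field_simp

lemma PV2 (hp : ∀ i, p i ∈ Set.Ioo (0 : ℝ) 1) {i j k : Fin n}
    (hij : i ≠ j) (hik : i ≠ k) (hjk : j ≠ k) :
    expec (bernWeight p) (fun z =>
        (indR (z i) * indR (z j) * indR (z k) / ((p i * p j) * (p i * p k))
          + (1 - indR (z i)) * (1 - indR (z j)) * (1 - indR (z k))
            / (((1 - p i) * (1 - p j)) * ((1 - p i) * (1 - p k))))
          * ((Y i j (z i) (z j) + Y j i (z j) (z i))
            * (Y i k (z i) (z k) + Y k i (z k) (z i))))
      = (Y i j true true + Y j i true true) * (Y i k true true + Y k i true true) / p i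
        + (Y i j false false + Y j i false false)
          * (Y i k false false + Y k i false false) / (1 - p i) := by
  have hpi : p i ≠ 0 := (hp i).1.ne'
  have hpj : p j ≠ 0 := (hp j).1.ne'
  have hpk : p k ≠ 0 := (hp k).1.ne'
  have hqi : (1 : ℝ) - p i ≠ 0 := sub_ne_zero_of_ne (hp i).2.ne'
  have hqj : (1 : ℝ) - p j ≠ 0 := sub_ne_zero_of_ne (hp j).2.ne'
  have hqk : (1 : ℝ) - p k ≠ 0 := sub_ne_zero_of_ne (hp k).2.ne'
  refine Eq.trans (expec_three p hij hik hjk (fun a b c =>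
    (indR a * indR b * indR c / ((p i * p j) * (p i * p k))
      + (1 - indR a) * (1 - indR b) * (1 - indR c)
        / (((1 - p i) * (1 - p j)) * ((1 - p i) * (1 - p k))))
      * ((Y i j a b + Y j i b a) * (Y i k a c + Y k i c a)))) ?_
  simp only [Fintype.sum_bool, bw, indR]
  norm_num
  field_simp


def VB (p : Fin n → ℝ) (Y : Fin n → Fin n → Bool → Bool → ℝ) (i j : Fin n)
    (z : Fin n → Bool) : ℝ :=
  (1 / 2) * (indR (z i) * indR (z j) / (p i * p j) ^ 2
      + (1 - indR (z i)) * (1 - indR (z j)) / ((1 - p i) * (1 - p j)) ^ 2)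
      * Sobs Y z i j ^ 2
    + ∑ k ∈ (univ.erase i).erase j,
      (indR (z i) * indR (z j) * indR (z k) / ((p i * p j) * (p i * p k))
        + (1 - indR (z i)) * (1 - indR (z j)) * (1 - indR (z k))
          / (((1 - p i) * (1 - p j)) * ((1 - p i) * (1 - p k))))
        * (Sobs Y z i j * Sobs Y z i k)

def EV1 (p : Fin n → ℝ) (Y : Fin n → Fin n → Bool → Bool → ℝ) (i j : Fin n) : ℝ :=
  (1 / 2) * ((Y i j true true + Y j i true true) ^ 2 / (p i * p j)
      + (Y i j false false + Y j i false false) ^ 2 / ((1 - p i) * (1 - p j)))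

def EV2 (p : Fin n → ℝ) (Y : Fin n → Fin n → Bool → Bool → ℝ) (i j k : Fin n) : ℝ :=
  (Y i j true true + Y j i true true) * (Y i k true true + Y k i true true) / p i
    + (Y i j false false + Y j i false false)
      * (Y i k false false + Y k i false false) / (1 - p i)

def VD1 (p : Fin n → ℝ) (Y : Fin n → Fin n → Bool → Bool → ℝ) (i j : Fin n) : ℝ :=
  (Y i j true true ^ 2 / (p i * p j)
      + Y i j false false ^ 2 / ((1 - p i) * (1 - p j)) - tij Y i j ^ 2)
    + (Y i j true true * Y j i true true / (p i * p j)
      + Y i j false false * Y j i false false / ((1 - p i) * (1 - p j))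
      - tij Y i j * tij Y j i)

def VD2 (p : Fin n → ℝ) (Y : Fin n → Fin n → Bool → Bool → ℝ) (i j k : Fin n) : ℝ :=
  (Y i j true true * Y i k true true / p i
      + Y i j false false * Y i k false false / (1 - p i) - tij Y i j * tij Y i k)
    + (Y i j true true * Y j k true true / p j
      + Y i j false false * Y j k false false / (1 - p j) - tij Y i j * tij Y j k)
    + (Y i j true true * Y k i true true / p i
      + Y i j false false * Y k i false false / (1 - p i) - tij Y i j * tij Y k i)
    + (Y i j true true * Y k j true true / p j
      + Y i j false false * Y k j false false / (1 - p j) - tij Y i j * tij Y k j)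

def B1 (Y : Fin n → Fin n → Bool → Bool → ℝ) (i j : Fin n) : ℝ :=
  (1 / 2) * (tij Y i j + tij Y j i) ^ 2

def B2 (Y : Fin n → Fin n → Bool → Bool → ℝ) (i j k : Fin n) : ℝ :=
  (tij Y i j + tij Y j i) * (tij Y i k + tij Y k i)

lemma dsub {α β : Type*} (s : Finset α) (t : α → Finset β) (f g : α → β → ℝ) :
    ((∑ i ∈ s, ∑ j ∈ t i, f i j) - ∑ i ∈ s, ∑ j ∈ t i, g i j)
      = ∑ i ∈ s, ∑ j ∈ t i, (f i j - g i j) := by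
  rw [← Finset.sum_sub_distrib]
  exact Finset.sum_congr rfl fun i _ => by rw [Finset.sum_sub_distrib]

lemma dadd {α β : Type*} (s : Finset α) (t : α → Finset β) (f g : α → β → ℝ) :
    (∑ i ∈ s, ∑ j ∈ t i, (f i j + g i j))
      = (∑ i ∈ s, ∑ j ∈ t i, f i j) + ∑ i ∈ s, ∑ j ∈ t i, g i j := by
  rw [← Finset.sum_add_distrib]
  exact Finset.sum_congr rfl fun i _ => Finset.sum_add_distrib

lemma varc_eq (w : (Fin n → Bool) → ℝ) (hw : ∑ z : Fin n → Bool, w z = 1)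
    (f : (Fin n → Bool) → ℝ) :
    varc w f = expec w (fun z => f z ^ 2) - expec w f ^ 2 := by
  unfold varc expec
  set μ := ∑ z : Fin n → Bool, w z * f z with hμ
  rw [show (∑ z : Fin n → Bool, w z * (f z - μ) ^ 2)
      = ∑ z : Fin n → Bool, (w z * f z ^ 2 - 2 * μ * (w z * f z) + μ ^ 2 * w z) from
    Finset.sum_congr rfl fun z _ => by ring]
  rw [Finset.sum_add_distrib, Finset.sum_sub_distrib, ← Finset.mul_sum, ← Finset.mul_sum, hw]
  ring

lemma sq_double_sum (F : Fin n → Fin n → ℝ) :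
    (∑ i, ∑ j ∈ univ.erase i, F i j) ^ 2
      = ∑ i, ∑ j ∈ univ.erase i, ∑ k, ∑ l ∈ univ.erase k, F i j * F k l := by
  rw [pow_two, Finset.sum_mul_sum]
  refine Finset.sum_congr rfl fun i _ => ?_
  calc ∑ k, (∑ j ∈ univ.erase i, F i j) * ∑ l ∈ univ.erase k, F k l
      = ∑ k, ∑ j ∈ univ.erase i, ∑ l ∈ univ.erase k, F i j * F k l :=
        Finset.sum_congr rfl fun k _ => Finset.sum_mul_sum _ _ _ _
    _ = ∑ j ∈ univ.erase i, ∑ k, ∑ l ∈ univ.erase k, F i j * F k l := Finset.sum_comm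

section Closed
variable (p : Fin n → ℝ) (Y : Fin n → Fin n → Bool → Bool → ℝ)

lemma Vhat_eq : Vhat p Y = fun z => ((n : ℝ) ^ 2)⁻¹ * ∑ i, ∑ j ∈ univ.erase i, VB p Y i j z :=
  rfl

lemma tauHT_eq :
    tauHT p Y = fun z => (n : ℝ)⁻¹ * ∑ i, ∑ j ∈ univ.erase i, AF p Y i j (z i) (z j) := rfl

lemma EV_closed (hp : ∀ i, p i ∈ Set.Ioo (0 : ℝ) 1) :
    expec (bernWeight p) (Vhat p Y)
      = ((n : ℝ) ^ 2)⁻¹ * ∑ i, ∑ j ∈ univ.erase i,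
          (EV1 p Y i j + ∑ k ∈ (univ.erase i).erase j, EV2 p Y i j k) := by
  rw [Vhat_eq]
  refine Eq.trans (expec_const_mul _ _ _) ?_
  congr 1
  refine Eq.trans (expec_sum _ _ _) (Finset.sum_congr rfl fun i _ => ?_)
  refine Eq.trans (expec_sum _ _ _) (Finset.sum_congr rfl fun j hj => ?_)
  have hij : i ≠ j := (Finset.ne_of_mem_erase hj).symm
  refine Eq.trans (expec_add _ _ _) (congrArg₂ (· + ·) (PV1 p Y hp hij) ?_)
  refine Eq.trans (expec_sum _ _ _) (Finset.sum_congr rfl fun k hk => ?_)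
  have hkj : k ≠ j := Finset.ne_of_mem_erase hk
  have hki : k ≠ i := Finset.ne_of_mem_erase (Finset.mem_of_mem_erase hk)
  exact PV2 p Y hp hij hki.symm hkj.symm

lemma Et_closed (hp : ∀ i, p i ∈ Set.Ioo (0 : ℝ) 1) :
    expec (bernWeight p) (tauHT p Y)
      = (n : ℝ)⁻¹ * ∑ i, ∑ j ∈ univ.erase i, tij Y i j := by
  rw [tauHT_eq]
  refine Eq.trans (expec_const_mul _ _ _) ?_
  congr 1
  refine Eq.trans (expec_sum _ _ _) (Finset.sum_congr rfl fun i _ => ?_)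
  refine Eq.trans (expec_sum _ _ _) (Finset.sum_congr rfl fun j hj => ?_)
  exact P1 p Y hp (Finset.ne_of_mem_erase hj).symm

lemma Et2_closed :
    expec (bernWeight p) (fun z => tauHT p Y z ^ 2)
      = ((n : ℝ)⁻¹) ^ 2 * ∑ i, ∑ j ∈ univ.erase i, ∑ k, ∑ l ∈ univ.erase k,
          expec (bernWeight p)
            (fun z => AF p Y i j (z i) (z j) * AF p Y k l (z k) (z l)) := by
  have hpt : (fun z : Fin n → Bool => tauHT p Y z ^ 2)
      = fun z => ((n : ℝ)⁻¹) ^ 2 * ∑ i, ∑ j ∈ univ.erase i, ∑ k, ∑ l ∈ univ.erase k,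
          AF p Y i j (z i) (z j) * AF p Y k l (z k) (z l) := by
    funext z
    have h0 : tauHT p Y z
        = (n : ℝ)⁻¹ * ∑ i, ∑ j ∈ univ.erase i, AF p Y i j (z i) (z j) := rfl
    rw [h0, mul_pow, sq_double_sum]
  rw [hpt]
  refine Eq.trans (expec_const_mul _ _ _) ?_
  congr 1
  refine Eq.trans (expec_sum _ _ _) (Finset.sum_congr rfl fun i _ => ?_)
  refine Eq.trans (expec_sum _ _ _) (Finset.sum_congr rfl fun j _ => ?_)
  refine Eq.trans (expec_sum _ _ _) (Finset.sum_congr rfl fun k _ => ?_)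
  exact expec_sum _ _ _

lemma var_sum_closed (hp : ∀ i, p i ∈ Set.Ioo (0 : ℝ) 1) :
    ((∑ i, ∑ j ∈ univ.erase i, ∑ k, ∑ l ∈ univ.erase k,
        expec (bernWeight p)
          (fun z => AF p Y i j (z i) (z j) * AF p Y k l (z k) (z l)))
      - ∑ i, ∑ j ∈ univ.erase i, ∑ k, ∑ l ∈ univ.erase k, tij Y i j * tij Y k l)
      = ∑ i, ∑ j ∈ univ.erase i,
          (VD1 p Y i j + ∑ k ∈ (univ.erase i).erase j, VD2 p Y i j k) := by
  rw [dsub]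
  refine Finset.sum_congr rfl fun i _ => Finset.sum_congr rfl fun j hj => ?_
  have hij : i ≠ j := (Finset.ne_of_mem_erase hj).symm
  rw [dsub]
  refine Eq.trans (quad_decomp i j hij
    (fun k l => expec (bernWeight p)
        (fun z => AF p Y i j (z i) (z j) * AF p Y k l (z k) (z l))
      - tij Y i j * tij Y k l)
    (fun k l hkl hki hkj hli hlj => by
      beta_reduce
      rw [P5 p Y hp hij hki.symm hli.symm hkj.symm hlj.symm hkl, sub_self])) ?_
  refine congrArg₂ (· + ·) ?_ ?_
  · beta_reduce
    rw [P2 p Y hp hij, P3 p Y hp hij]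
    simp only [VD1]
    try ring
  · refine Finset.sum_congr rfl fun k hk => ?_
    have hkj : k ≠ j := Finset.ne_of_mem_erase hk
    have hki : k ≠ i := Finset.ne_of_mem_erase (Finset.mem_of_mem_erase hk)
    beta_reduce
    rw [PS1 p Y hp hij hki.symm hkj.symm, PS2 p Y hp hij hki.symm hkj.symm,
      PS3 p Y hp hij hki.symm hkj.symm, PS4 p Y hp hij hki.symm hkj.symm]
    simp only [VD2]
    try ring

end Closed
end Pats
end S12

/-- under Bernoulli randomization and dyadic interference,
E(V̂) = var(τ̂_HT) + bias(V̂). -/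
theorem statement12 (n : ℕ) (hn : 2 ≤ n) (p : Fin n → ℝ)
    (hp : ∀ i, p i ∈ Set.Ioo (0 : ℝ) 1)
    (Y : Fin n → Fin n → Bool → Bool → ℝ) :
    expec (bernWeight p) (Vhat p Y)
      = varc (bernWeight p) (tauHT p Y) + biasV Y := by
  classical
  rw [S12.EV_closed p Y hp,
    S12.varc_eq (bernWeight p) (S12.bern_sum_one p) (tauHT p Y),
    S12.Et2_closed p Y, S12.Et_closed p Y hp]
  rw [show biasV Y = ((n : ℝ) ^ 2)⁻¹ * ∑ i, ∑ j ∈ univ.erase i,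
      (S12.B1 Y i j + ∑ k ∈ (univ.erase i).erase j, S12.B2 Y i j k) from rfl]
  rw [mul_pow, S12.sq_double_sum (fun i j => tij Y i j), ← mul_sub,
    S12.var_sum_closed p Y hp]
  have h1 : ∀ i j : Fin n, i ≠ j →
      ((S12.EV1 p Y i j - S12.VD1 p Y i j - S12.B1 Y i j)
        + (S12.EV1 p Y j i - S12.VD1 p Y j i - S12.B1 Y j i)) = 0 := by
    intro i j hij
    simp only [S12.EV1, S12.VD1, S12.B1, tij]
    ring
  have h2 : ∀ i j k : Fin n, i ≠ j → i ≠ k → j ≠ k →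
      ((S12.EV2 p Y i j k - S12.VD2 p Y i j k - S12.B2 Y i j k)
        + (S12.EV2 p Y j i k - S12.VD2 p Y j i k - S12.B2 Y j i k)) = 0 := by
    intro i j k hij hik hjk
    simp only [S12.EV2, S12.VD2, S12.B2, tij]
    ring
  have hz : ∑ i, ∑ j ∈ univ.erase i,
      ((S12.EV1 p Y i j - S12.VD1 p Y i j - S12.B1 Y i j)
        + ∑ k ∈ (univ.erase i).erase j,
          (S12.EV2 p Y i j k - S12.VD2 p Y i j k - S12.B2 Y i j k)) = 0 := by
    rw [S12.dadd]
    rw [S12.sum_pair_antisym _ h1,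
      S12.sum_triple_antisym _ (fun i j k hij hik hjk => h2 i j k hij hik hjk), add_zero]
  have hsplit : ∑ i, ∑ j ∈ univ.erase i,
      ((S12.EV1 p Y i j + ∑ k ∈ (univ.erase i).erase j, S12.EV2 p Y i j k)
        - ((S12.VD1 p Y i j + ∑ k ∈ (univ.erase i).erase j, S12.VD2 p Y i j k)
          + (S12.B1 Y i j + ∑ k ∈ (univ.erase i).erase j, S12.B2 Y i j k)))
      = ∑ i, ∑ j ∈ univ.erase i,
          ((S12.EV1 p Y i j - S12.VD1 p Y i j - S12.B1 Y i j)
            + ∑ k ∈ (univ.erase i).erase j,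
              (S12.EV2 p Y i j k - S12.VD2 p Y i j k - S12.B2 Y i j k)) := by
    refine Finset.sum_congr rfl fun i _ => Finset.sum_congr rfl fun j _ => ?_
    rw [Finset.sum_sub_distrib, Finset.sum_sub_distrib]
    ring
  have h4 := hsplit.trans hz
  have h5 : ∑ i, ∑ j ∈ univ.erase i,
      ((S12.EV1 p Y i j + ∑ k ∈ (univ.erase i).erase j, S12.EV2 p Y i j k)
        - ((S12.VD1 p Y i j + ∑ k ∈ (univ.erase i).erase j, S12.VD2 p Y i j k)
          + (S12.B1 Y i j + ∑ k ∈ (univ.erase i).erase j, S12.B2 Y i j k)))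
      = (∑ i, ∑ j ∈ univ.erase i,
          (S12.EV1 p Y i j + ∑ k ∈ (univ.erase i).erase j, S12.EV2 p Y i j k))
        - ∑ i, ∑ j ∈ univ.erase i,
          ((S12.VD1 p Y i j + ∑ k ∈ (univ.erase i).erase j, S12.VD2 p Y i j k)
            + (S12.B1 Y i j + ∑ k ∈ (univ.erase i).erase j, S12.B2 Y i j k)) :=
    (S12.dsub _ _ _ _).symm
  have h6 : ∑ i, ∑ j ∈ univ.erase i,
      ((S12.VD1 p Y i j + ∑ k ∈ (univ.erase i).erase j, S12.VD2 p Y i j k)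
        + (S12.B1 Y i j + ∑ k ∈ (univ.erase i).erase j, S12.B2 Y i j k))
      = (∑ i, ∑ j ∈ univ.erase i,
          (S12.VD1 p Y i j + ∑ k ∈ (univ.erase i).erase j, S12.VD2 p Y i j k))
        + ∑ i, ∑ j ∈ univ.erase i,
          (S12.B1 Y i j + ∑ k ∈ (univ.erase i).erase j, S12.B2 Y i j k) :=
    S12.dadd _ _ _ _
  have hmain : (∑ i, ∑ j ∈ univ.erase i,
      (S12.EV1 p Y i j + ∑ k ∈ (univ.erase i).erase j, S12.EV2 p Y i j k))
      = (∑ i, ∑ j ∈ univ.erase i,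
          (S12.VD1 p Y i j + ∑ k ∈ (univ.erase i).erase j, S12.VD2 p Y i j k))
        + ∑ i, ∑ j ∈ univ.erase i,
          (S12.B1 Y i j + ∑ k ∈ (univ.erase i).erase j, S12.B2 Y i j k) := by
    rw [h6] at h5
    linarith [h4, h5]
  rw [hmain]
  ring
end
end

section
/- Under Bernoulli randomization and dyadic interference, the estimator d̂_∞ = max_i Σ_{j≠i} 1{Y_ij ≠ 0 or Y_ji ≠ 0} (Z_ij/p_ij + Z̄_ij/q_ij) satisfies E(d̂_∞) ≥ max_{𝗓∈{0,1}} d_∞(𝗓). -/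
open Finset
open scoped Classical

noncomputable section

/-- The observed estimator d̂_∞ of the maximum number of neighbours. -/
def dinfHat {n : ℕ} (p : Fin n → ℝ) (Y : Fin n → Fin n → Bool → Bool → ℝ)
    (z : Fin n → Bool) : ℝ :=
  sSup (Set.range fun i : Fin n =>
    ∑ j ∈ univ.erase i,
      (if Y i j (z i) (z j) ≠ 0 ∨ Y j i (z j) (z i) ≠ 0 then (1 : ℝ) else 0)
        * (indR (z i) * indR (z j) / (p i * p j)
            + (1 - indR (z i)) * (1 - indR (z j)) / ((1 - p i) * (1 - p j))))


lemma sum_pi_bool {m : ℕ} (g : Fin m → Bool → ℝ) :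
    ∑ z : Fin m → Bool, ∏ k, g k (z k) = ∏ k, (g k true + g k false) := by
  calc ∑ z : Fin m → Bool, ∏ k, g k (z k)
      = ∑ z ∈ Fintype.piFinset (fun _ : Fin m => (univ : Finset Bool)), ∏ k, g k (z k) := by
        rw [Fintype.piFinset_univ]
    _ = ∏ k, ∑ b : Bool, g k b := (Finset.prod_univ_sum _ _).symm
    _ = ∏ k, (g k true + g k false) := by
        refine Finset.prod_congr rfl fun k _ => ?_
        simp [add_comm]

lemma pair_expec {m : ℕ} (p : Fin m → ℝ) {i j : Fin m} (hij : i ≠ j) (s : Bool) :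
    ∑ z : Fin m → Bool,
        bernWeight p z * ((if z i = s then (1:ℝ) else 0) * (if z j = s then 1 else 0))
      = (if s then p i else 1 - p i) * (if s then p j else 1 - p j) := by
  have key : ∀ z : Fin m → Bool,
      bernWeight p z * ((if z i = s then (1:ℝ) else 0) * (if z j = s then 1 else 0))
        = ∏ k, ((if z k then p k else 1 - p k) *
            ((if k = i then (if z k = s then (1:ℝ) else 0) else 1) *
             (if k = j then (if z k = s then (1:ℝ) else 0) else 1))) := by
    intro z
    rw [Finset.prod_mul_distrib, Finset.prod_mul_distrib]
    simp only [bernWeight, Finset.prod_ite_eq']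
    simp
  rw [Finset.sum_congr rfl fun z _ => key z,
    sum_pi_bool (fun k b => (if b then p k else 1 - p k) *
      ((if k = i then (if b = s then (1:ℝ) else 0) else 1) *
       (if k = j then (if b = s then (1:ℝ) else 0) else 1)))]
  have h1 : ∀ k : Fin m,
      ((if (true:Bool) then p k else 1 - p k) *
        ((if k = i then (if (true:Bool) = s then (1:ℝ) else 0) else 1) *
         (if k = j then (if (true:Bool) = s then (1:ℝ) else 0) else 1)))
      + ((if (false:Bool) then p k else 1 - p k) *
        ((if k = i then (if (false:Bool) = s then (1:ℝ) else 0) else 1) *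
         (if k = j then (if (false:Bool) = s then (1:ℝ) else 0) else 1)))
      = (if k = i then (if s then p i else 1 - p i) else 1) *
        (if k = j then (if s then p j else 1 - p j) else 1) := by
    intro k
    rcases eq_or_ne k i with rfl | hki <;> rcases eq_or_ne k j with rfl | hkj <;>
      cases s <;> simp_all
  rw [Finset.prod_congr rfl fun k _ => h1 k, Finset.prod_mul_distrib]
  simp [Finset.prod_ite_eq', hij]

/-- The `i`-th inner sum of the estimator `dinfHat`. -/
def Fi {n : ℕ} (p : Fin n → ℝ) (Y : Fin n → Fin n → Bool → Bool → ℝ)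
    (i : Fin n) (z : Fin n → Bool) : ℝ :=
  ∑ j ∈ univ.erase i,
    (if Y i j (z i) (z j) ≠ 0 ∨ Y j i (z j) (z i) ≠ 0 then (1 : ℝ) else 0)
      * (indR (z i) * indR (z j) / (p i * p j)
          + (1 - indR (z i)) * (1 - indR (z j)) / ((1 - p i) * (1 - p j)))

lemma bern_nonneg {m : ℕ} (p : Fin m → ℝ) (hp : ∀ i, p i ∈ Set.Ioo (0 : ℝ) 1)
    (z : Fin m → Bool) : 0 ≤ bernWeight p z := by
  refine Finset.prod_nonneg fun k _ => ?_
  rcases hp k with ⟨h0, h1⟩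
  split <;> linarith

lemma indR_bounds (b : Bool) : 0 ≤ indR b ∧ indR b ≤ 1 := by
  cases b <;> simp [indR]

lemma term_nonneg {n : ℕ} (p : Fin n → ℝ) (hp : ∀ i, p i ∈ Set.Ioo (0 : ℝ) 1)
    (Y : Fin n → Fin n → Bool → Bool → ℝ) (i j : Fin n) (z : Fin n → Bool) :
    0 ≤ (if Y i j (z i) (z j) ≠ 0 ∨ Y j i (z j) (z i) ≠ 0 then (1 : ℝ) else 0)
      * (indR (z i) * indR (z j) / (p i * p j)
          + (1 - indR (z i)) * (1 - indR (z j)) / ((1 - p i) * (1 - p j))) := by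
  obtain ⟨hi0, hi1⟩ := hp i
  obtain ⟨hj0, hj1⟩ := hp j
  have h1 : 0 ≤ indR (z i) * indR (z j) / (p i * p j) :=
    div_nonneg (mul_nonneg (indR_bounds _).1 (indR_bounds _).1)
      (le_of_lt (mul_pos hi0 hj0))
  have h2 : 0 ≤ (1 - indR (z i)) * (1 - indR (z j)) / ((1 - p i) * (1 - p j)) :=
    div_nonneg (mul_nonneg (by linarith [(indR_bounds (z i)).2])
        (by linarith [(indR_bounds (z j)).2]))
      (le_of_lt (mul_pos (by linarith) (by linarith)))
  split_ifs
  · rw [one_mul]; exact add_nonneg h1 h2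
  · rw [zero_mul]

lemma card_le_expec {n : ℕ} (p : Fin n → ℝ) (hp : ∀ i, p i ∈ Set.Ioo (0 : ℝ) 1)
    (Y : Fin n → Fin n → Bool → Bool → ℝ) (s : Bool) (i : Fin n) :
    ((nbhd Y s i).card : ℝ) ≤ expec (bernWeight p) (Fi p Y i) := by
  classical
  set Pr : Fin n → ℝ := fun k => if s then p k else 1 - p k with hPr
  have hPrpos : ∀ k, 0 < Pr k := by
    intro k
    obtain ⟨h0, h1⟩ := hp k
    simp only [hPr]
    cases s <;> simp <;> linarith
  set G : (Fin n → Bool) → ℝ := fun z => ∑ j ∈ univ.erase i,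
      (if j ∈ nbhd Y s i then (Pr i * Pr j)⁻¹ *
        ((if z i = s then (1:ℝ) else 0) * (if z j = s then 1 else 0)) else 0) with hG
  have hGF : ∀ z, G z ≤ Fi p Y i z := by
    intro z
    refine Finset.sum_le_sum fun j hj => ?_
    by_cases hjn : j ∈ nbhd Y s i
    · by_cases hzi : z i = s
      · by_cases hzj : z j = s
        · have hcond : Y i j (z i) (z j) ≠ 0 ∨ Y j i (z j) (z i) ≠ 0 := by
            rw [hzi, hzj]
            exact (Finset.mem_filter.mp hjn).2
          rw [if_pos hjn, if_pos hcond, if_pos hzi, if_pos hzj, one_mul, mul_one, one_mul]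
          obtain ⟨hi0, hi1⟩ := hp i
          obtain ⟨hj0, hj1⟩ := hp j
          cases s
          · have hzi' : indR (z i) = 0 := by rw [hzi]; simp [indR]
            have hzj' : indR (z j) = 0 := by rw [hzj]; simp [indR]
            rw [hzi', hzj']
            simp [hPr]
          · have hzi' : indR (z i) = 1 := by rw [hzi]; simp [indR]
            have hzj' : indR (z j) = 1 := by rw [hzj]; simp [indR]
            rw [hzi', hzj']
            have : 0 < (1 - p i) * (1 - p j) := mul_pos (by linarith) (by linarith)
            simp [hPr]
        · rw [if_pos hjn, if_neg hzj, mul_zero, mul_zero]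
          exact term_nonneg p hp Y i j z
      · rw [if_pos hjn, if_neg hzi, zero_mul, mul_zero]
        exact term_nonneg p hp Y i j z
    · rw [if_neg hjn]
      exact term_nonneg p hp Y i j z
  have hGE : expec (bernWeight p) G = ((nbhd Y s i).card : ℝ) := by
    unfold expec
    calc ∑ z : Fin n → Bool, bernWeight p z * G z
        = ∑ j ∈ univ.erase i, ∑ z : Fin n → Bool, bernWeight p z *
            (if j ∈ nbhd Y s i then (Pr i * Pr j)⁻¹ *
              ((if z i = s then (1:ℝ) else 0) * (if z j = s then 1 else 0)) else 0) := by
          simp_rw [hG, Finset.mul_sum]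
          exact Finset.sum_comm
      _ = ∑ j ∈ univ.erase i, (if j ∈ nbhd Y s i then (1:ℝ) else 0) := by
          refine Finset.sum_congr rfl fun j hj => ?_
          have hij : i ≠ j := (Finset.ne_of_mem_erase hj).symm
          by_cases hjn : j ∈ nbhd Y s i
          · rw [if_pos hjn]
            calc ∑ z : Fin n → Bool, bernWeight p z *
                  (if j ∈ nbhd Y s i then (Pr i * Pr j)⁻¹ *
                    ((if z i = s then (1:ℝ) else 0) * (if z j = s then 1 else 0)) else 0)
                = (Pr i * Pr j)⁻¹ * ∑ z : Fin n → Bool, bernWeight p z *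
                    ((if z i = s then (1:ℝ) else 0) * (if z j = s then 1 else 0)) := by
                  rw [Finset.mul_sum]
                  refine Finset.sum_congr rfl fun z _ => ?_
                  rw [if_pos hjn]
                  ring
              _ = (Pr i * Pr j)⁻¹ * (Pr i * Pr j) := by
                  rw [pair_expec p hij s]
              _ = 1 := inv_mul_cancel₀ (ne_of_gt (mul_pos (hPrpos i) (hPrpos j)))
          · simp [hjn]
      _ = ((nbhd Y s i).card : ℝ) := by
          have hsub : nbhd Y s i ⊆ univ.erase i := Finset.filter_subset _ _
          rw [Finset.sum_ite_mem, Finset.inter_eq_right.mpr hsub]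
          simp
  rw [← hGE]
  exact Finset.sum_le_sum fun z _ => mul_le_mul_of_nonneg_left (hGF z) (bern_nonneg p hp z)

/-- under Bernoulli randomization and dyadic interference,
E(d̂_∞) ≥ max_𝗓 d_∞(𝗓). -/
theorem statement16 (n : ℕ) (hn : 2 ≤ n) (p : Fin n → ℝ)
    (hp : ∀ i, p i ∈ Set.Ioo (0 : ℝ) 1)
    (Y : Fin n → Fin n → Bool → Bool → ℝ) :
    max (dinf Y false) (dinf Y true) ≤ expec (bernWeight p) (dinfHat p Y) := by
  classical
  have hw := bern_nonneg p hp
  have hFd : ∀ (i : Fin n) (z : Fin n → Bool), Fi p Y i z ≤ dinfHat p Y z := fun i z =>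
    le_csSup (Set.Finite.bddAbove (Set.finite_range _)) ⟨i, rfl⟩
  have hmono : ∀ i : Fin n,
      expec (bernWeight p) (Fi p Y i) ≤ expec (bernWeight p) (dinfHat p Y) :=
    fun i => Finset.sum_le_sum fun z _ => mul_le_mul_of_nonneg_left (hFd i z) (hw z)
  have key : ∀ (s : Bool) (i : Fin n),
      ((nbhd Y s i).card : ℝ) ≤ expec (bernWeight p) (dinfHat p Y) :=
    fun s i => (card_le_expec p hp Y s i).trans (hmono i)
  have hn0 : 0 < n := by omega
  have hE0 : 0 ≤ expec (bernWeight p) (dinfHat p Y) :=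
    le_trans (by positivity) (key false ⟨0, hn0⟩)
  refine max_le ?_ ?_ <;>
  · refine Real.sSup_le ?_ hE0
    rintro x ⟨i, rfl⟩
    exact key _ i
end
end
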